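/- arXiv:2210.01255 — 7 statements merged into one kernel-verified Lean document; each statement's English description precedes it below -/
import Mathlib

section
/- Let ξ > 0 and let γ_E(y) = ξ³ π^{-3/2} e^{-ξ²|y|²} for y ∈ ℝ³ (the Ewald screening function). Then for every x ∈ ℝ³ with x ≠ 0, the convolution of the harmonic kernel 1/|·| with γ_E satisfies ∫_{ℝ³} γ_E(y) / |x − y| dy = erf(ξ|x|) / |x|. -/
open MeasureTheory

open scoped RealInnerProductSpace

section Aux

variable {V : Type*} [NormedAddCommGroup V] [InnerProductSpace ℝ V] [FiniteDimensional ℝ V]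
  [MeasurableSpace V] [BorelSpace V]

/-- Real version of the Gaussian integral with a linear term. -/
lemma rexp_gauss_add {b : ℝ} (hb : 0 < b) (c : ℝ) (w : V) :
    ∫ v : V, Real.exp (-b * ‖v‖ ^ 2 + c * ⟪w, v⟫) =
      (Real.pi / b) ^ (Module.finrank ℝ V / 2 : ℝ) * Real.exp (c ^ 2 * ‖w‖ ^ 2 / (4 * b)) := by
  have hb' : 0 < (b : ℂ).re := by simpa using hb
  have h := GaussianFourier.integral_cexp_neg_mul_sq_norm_add (V := V) hb' (c : ℂ) w
  have e : ∀ v : V, Complex.exp (-(b:ℂ) * ‖v‖ ^ 2 + (c:ℂ) * (⟪w, v⟫ : ℝ))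
      = ((Real.exp (-b * ‖v‖ ^ 2 + c * ⟪w, v⟫) : ℝ) : ℂ) := fun v => by
    rw [Complex.ofReal_exp]; congr 1; push_cast; ring
  rw [← Complex.ofReal_inj]
  have key : ((∫ v : V, Real.exp (-b * ‖v‖ ^ 2 + c * ⟪w, v⟫) : ℝ) : ℂ)
      = ∫ v : V, Complex.exp (-(b:ℂ) * ‖v‖ ^ 2 + (c:ℂ) * (⟪w, v⟫ : ℝ)) := by
    simp only [e]; exact integral_ofReal.symm
  rw [key, h, Complex.ofReal_mul, Complex.ofReal_exp,
    ← Complex.ofReal_div, Complex.ofReal_cpow (by positivity)]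
  push_cast
  ring_nf

lemma rexp_gauss_add_integrable {b : ℝ} (hb : 0 < b) (c : ℝ) (w : V) :
    Integrable (fun v : V ↦ Real.exp (-b * ‖v‖ ^ 2 + c * ⟪w, v⟫)) := by
  have hb' : 0 < (b : ℂ).re := by simpa using hb
  have h := (GaussianFourier.integrable_cexp_neg_mul_sq_norm_add (V := V) hb' (c : ℂ) w).norm
  refine h.congr (Filter.Eventually.of_forall fun v => ?_)
  simp only [Complex.norm_exp]
  congr 1
  simp [← Complex.ofReal_pow]

end Aux

section Dim3

local notation "E" => EuclideanSpace ℝ (Fin 3)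

/-- The space integral at fixed `t`. -/
lemma gauss3_integral {ξ : ℝ} (hξ : 0 < ξ) (t : ℝ) (x : E) :
    ∫ y : E, Real.exp (-(ξ ^ 2 * ‖y‖ ^ 2)) * Real.exp (-(t ^ 2 * ‖x - y‖ ^ 2)) =
      Real.pi ^ ((3:ℝ)/2) / (Real.sqrt (ξ ^ 2 + t ^ 2)) ^ 3 *
        Real.exp (-(ξ ^ 2 * t ^ 2 * ‖x‖ ^ 2 / (ξ ^ 2 + t ^ 2))) := by
  have hb : 0 < ξ ^ 2 + t ^ 2 := by positivity
  have e : ∀ y : E, Real.exp (-(ξ ^ 2 * ‖y‖ ^ 2)) * Real.exp (-(t ^ 2 * ‖x - y‖ ^ 2))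
      = Real.exp (-(t ^ 2 * ‖x‖ ^ 2)) *
        Real.exp (-(ξ ^ 2 + t ^ 2) * ‖y‖ ^ 2 + (2 * t ^ 2) * ⟪x, y⟫) := fun y => by
    rw [← Real.exp_add, ← Real.exp_add]
    congr 1
    rw [show ‖x - y‖ ^ 2 = ‖x‖ ^ 2 - 2 * ⟪x, y⟫ + ‖y‖ ^ 2 from norm_sub_sq_real x y]
    ring
  simp only [e]
  rw [MeasureTheory.integral_const_mul, rexp_gauss_add hb (2 * t ^ 2) x,
    finrank_euclideanSpace_fin]
  have hsq : (Real.sqrt (ξ ^ 2 + t ^ 2)) ^ 3 = (ξ ^ 2 + t ^ 2) ^ ((3:ℝ)/2) := by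
    rw [Real.sqrt_eq_rpow, ← Real.rpow_natCast ((ξ ^ 2 + t ^ 2) ^ ((1:ℝ)/2)) 3,
      ← Real.rpow_mul hb.le]
    norm_num
  have hpow : ((Real.pi / (ξ ^ 2 + t ^ 2)) ^ ((3:ℕ) / 2 : ℝ) : ℝ)
      = Real.pi ^ ((3:ℝ)/2) / (Real.sqrt (ξ ^ 2 + t ^ 2)) ^ 3 := by
    rw [Real.div_rpow Real.pi_pos.le hb.le, hsq]
    norm_num
  rw [hpow, mul_left_comm, ← Real.exp_add]
  congr 1
  rw [Real.exp_eq_exp]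
  field_simp
  ring

lemma gauss3_integrable {ξ : ℝ} (hξ : 0 < ξ) (t : ℝ) (x : E) :
    Integrable (fun y : E => Real.exp (-(ξ ^ 2 * ‖y‖ ^ 2)) * Real.exp (-(t ^ 2 * ‖x - y‖ ^ 2))) := by
  have hb : 0 < ξ ^ 2 + t ^ 2 := by positivity
  refine ((rexp_gauss_add_integrable hb (2 * t ^ 2) x).const_mul
    (Real.exp (-(t ^ 2 * ‖x‖ ^ 2)))).congr (Filter.Eventually.of_forall fun y => ?_)
  dsimp only
  rw [← Real.exp_add, ← Real.exp_add]
  congr 1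
  rw [show ‖x - y‖ ^ 2 = ‖x‖ ^ 2 - 2 * ⟪x, y⟫ + ‖y‖ ^ 2 from norm_sub_sq_real x y]
  ring

end Dim3

/-- The error function `erf t = (2/√π) ∫₀ᵗ e^{-s²} ds`. -/
noncomputable def erf (t : ℝ) : ℝ :=
  (2 / Real.sqrt Real.pi) * ∫ s in (0:ℝ)..t, Real.exp (-(s ^ 2))

section OneDim

open Set Filter intervalIntegral

/-- The one-dimensional improper integral arising after the angular/Gaussian integration. -/
lemma oneDim_integral {ξ r : ℝ} (hξ : 0 < ξ) (hr : 0 < r) :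
    IntegrableOn (fun t : ℝ => (2 / Real.sqrt Real.pi) * ξ ^ 3 / (Real.sqrt (ξ ^ 2 + t ^ 2)) ^ 3 *
        Real.exp (-(ξ ^ 2 * t ^ 2 * r ^ 2 / (ξ ^ 2 + t ^ 2)))) (Ioi 0) ∧
      ∫ t in Ioi (0:ℝ), (2 / Real.sqrt Real.pi) * ξ ^ 3 / (Real.sqrt (ξ ^ 2 + t ^ 2)) ^ 3 *
        Real.exp (-(ξ ^ 2 * t ^ 2 * r ^ 2 / (ξ ^ 2 + t ^ 2))) = erf (ξ * r) / r := by
  set G : ℝ → ℝ := fun t => (2 / Real.sqrt Real.pi) * ξ ^ 3 / (Real.sqrt (ξ ^ 2 + t ^ 2)) ^ 3 *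
      Real.exp (-(ξ ^ 2 * t ^ 2 * r ^ 2 / (ξ ^ 2 + t ^ 2))) with hG
  have hbpos : ∀ t : ℝ, 0 < ξ ^ 2 + t ^ 2 := fun t => by positivity
  have hspos : ∀ t : ℝ, 0 < Real.sqrt (ξ ^ 2 + t ^ 2) := fun t => Real.sqrt_pos.2 (hbpos t)
  set φ : ℝ → ℝ := fun t => ξ * t / Real.sqrt (ξ ^ 2 + t ^ 2) with hφ
  have hder : ∀ t : ℝ, HasDerivAt φ (ξ ^ 3 / (Real.sqrt (ξ ^ 2 + t ^ 2)) ^ 3) t := by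
    intro t
    have hq : HasDerivAt (fun t : ℝ => ξ ^ 2 + t ^ 2) (2 * t) t := by
      simpa using (hasDerivAt_pow 2 t).const_add (ξ ^ 2)
    have hs : HasDerivAt (fun t : ℝ => Real.sqrt (ξ ^ 2 + t ^ 2))
        (2 * t / (2 * Real.sqrt (ξ ^ 2 + t ^ 2))) t := hq.sqrt (hbpos t).ne'
    have hnum : HasDerivAt (fun t : ℝ => ξ * t) ξ t := by
      simpa using (hasDerivAt_id t).const_mul ξ
    have h := hnum.div hs (hspos t).ne'
    refine h.congr_deriv ?_
    have hsq : Real.sqrt (ξ ^ 2 + t ^ 2) ^ 2 = ξ ^ 2 + t ^ 2 := Real.sq_sqrt (hbpos t).le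
    set s := Real.sqrt (ξ ^ 2 + t ^ 2) with hsdef
    field_simp
    rw [hsq]; ring
  have hφsq : ∀ t : ℝ, (φ t) ^ 2 = ξ ^ 2 * t ^ 2 / (ξ ^ 2 + t ^ 2) := fun t => by
    rw [hφ]
    rw [div_pow, Real.sq_sqrt (hbpos t).le, mul_pow]
  have hGeq : ∀ t : ℝ, G t = (2 / Real.sqrt Real.pi) *
      ((ξ ^ 3 / (Real.sqrt (ξ ^ 2 + t ^ 2)) ^ 3) • Real.exp (-(r ^ 2) * (φ t) ^ 2)) := by
    intro t
    rw [smul_eq_mul, hG, hφsq t]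
    have : -(r ^ 2) * (ξ ^ 2 * t ^ 2 / (ξ ^ 2 + t ^ 2)) = -(ξ ^ 2 * t ^ 2 * r ^ 2 / (ξ ^ 2 + t ^ 2)) := by
      ring
    rw [this]
    ring
  have hφ'cont : Continuous (fun t : ℝ => ξ ^ 3 / (Real.sqrt (ξ ^ 2 + t ^ 2)) ^ 3) :=
    continuous_const.div (by fun_prop) (fun t => by positivity)
  have hIcc : ∀ T : ℝ, ∫ t in (0:ℝ)..T, G t
      = (2 / Real.sqrt Real.pi) * ∫ u in (0:ℝ)..(φ T), Real.exp (-(r ^ 2) * u ^ 2) := by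
    intro T
    have key := intervalIntegral.integral_comp_smul_deriv (a := 0) (b := T)
      (f := φ) (f' := fun t => ξ ^ 3 / (Real.sqrt (ξ ^ 2 + t ^ 2)) ^ 3)
      (g := fun u => Real.exp (-(r ^ 2) * u ^ 2))
      (fun t _ => hder t) hφ'cont.continuousOn (by fun_prop)
    have hφ0 : φ 0 = 0 := by simp [hφ]
    calc ∫ t in (0:ℝ)..T, G t
        = ∫ t in (0:ℝ)..T, (2 / Real.sqrt Real.pi) *
            ((ξ ^ 3 / (Real.sqrt (ξ ^ 2 + t ^ 2)) ^ 3) • Real.exp (-(r ^ 2) * (φ t) ^ 2)) := by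
          simp only [hGeq]
      _ = (2 / Real.sqrt Real.pi) * ∫ t in (0:ℝ)..T,
            (ξ ^ 3 / (Real.sqrt (ξ ^ 2 + t ^ 2)) ^ 3) • Real.exp (-(r ^ 2) * (φ t) ^ 2) :=
          intervalIntegral.integral_const_mul _ _
      _ = (2 / Real.sqrt Real.pi) * ∫ u in (0:ℝ)..(φ T), Real.exp (-(r ^ 2) * u ^ 2) := by
          have key' : (∫ t in (0:ℝ)..T,
              (ξ ^ 3 / (Real.sqrt (ξ ^ 2 + t ^ 2)) ^ 3) • Real.exp (-(r ^ 2) * (φ t) ^ 2))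
              = ∫ u in (0:ℝ)..(φ T), Real.exp (-(r ^ 2) * u ^ 2) := by
            simpa [hφ0, Function.comp] using key
          rw [key']
  have hφtend : Tendsto φ atTop (nhds ξ) := by
    have h1 : Tendsto (fun T : ℝ => ξ ^ 2 / T ^ 2) atTop (nhds 0) := by
      apply Tendsto.div_atTop tendsto_const_nhds
      exact tendsto_pow_atTop (two_ne_zero)
    have h2 : Tendsto (fun T : ℝ => ξ / Real.sqrt (ξ ^ 2 / T ^ 2 + 1)) atTop
        (nhds (ξ / Real.sqrt (0 + 1))) := by
      apply Tendsto.div tendsto_const_nhds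
      · exact (Real.continuous_sqrt.continuousAt.tendsto).comp (h1.add tendsto_const_nhds)
      · simp
    have heq : (fun T : ℝ => ξ / Real.sqrt (ξ ^ 2 / T ^ 2 + 1)) =ᶠ[atTop] φ := by
      filter_upwards [eventually_gt_atTop (0:ℝ)] with T hT
      show ξ / Real.sqrt (ξ ^ 2 / T ^ 2 + 1) = ξ * T / Real.sqrt (ξ ^ 2 + T ^ 2)
      have hq : ξ ^ 2 + T ^ 2 = T ^ 2 * (ξ ^ 2 / T ^ 2 + 1) := by field_simp
      rw [hq, Real.sqrt_mul (by positivity), Real.sqrt_sq hT.le]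
      have hA : 0 < Real.sqrt (ξ ^ 2 / T ^ 2 + 1) := Real.sqrt_pos.2 (by positivity)
      field_simp
    have h3 := h2.congr' heq
    simpa using h3
  have hprim : Continuous (fun u : ℝ => ∫ v in (0:ℝ)..u, Real.exp (-(r ^ 2) * v ^ 2)) :=
    intervalIntegral.continuous_primitive
      (fun a b => (Continuous.intervalIntegrable (by fun_prop) a b)) 0
  have htend : Tendsto (fun T => ∫ t in (0:ℝ)..T, G t) atTop
      (nhds ((2 / Real.sqrt Real.pi) * ∫ u in (0:ℝ)..ξ, Real.exp (-(r ^ 2) * u ^ 2))) := by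
    simp only [hIcc]
    exact Tendsto.const_mul _ ((hprim.continuousAt.tendsto).comp hφtend)
  have hGnn : ∀ t : ℝ, 0 ≤ G t := fun t => by
    rw [hG]
    positivity
  have hGcont : Continuous G := by
    apply Continuous.mul
    · exact continuous_const.div (by fun_prop) (fun t => by positivity)
    · exact Real.continuous_exp.comp
        (((by fun_prop : Continuous fun t : ℝ => ξ ^ 2 * t ^ 2 * r ^ 2).div
          (by fun_prop) (fun t => (hbpos t).ne')).neg)
  have hint : IntegrableOn G (Ioi 0) := by
    apply integrableOn_Ioi_of_intervalIntegral_norm_tendsto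
      ((2 / Real.sqrt Real.pi) * ∫ u in (0:ℝ)..ξ, Real.exp (-(r ^ 2) * u ^ 2)) 0
      (fun T : ℝ => hGcont.integrableOn_Ioc) tendsto_id
    simpa only [Real.norm_eq_abs, abs_of_nonneg (hGnn _), id_eq] using htend
  refine ⟨hint, ?_⟩
  have hval : ∫ t in Ioi (0:ℝ), G t
      = (2 / Real.sqrt Real.pi) * ∫ u in (0:ℝ)..ξ, Real.exp (-(r ^ 2) * u ^ 2) :=
    tendsto_nhds_unique (intervalIntegral_tendsto_integral_Ioi 0 hint tendsto_id) htend
  rw [hval]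
  have hsub : ∫ u in (0:ℝ)..ξ, Real.exp (-(r ^ 2) * u ^ 2)
      = r⁻¹ * ∫ s in (0:ℝ)..(ξ * r), Real.exp (-(s ^ 2)) := by
    have h := intervalIntegral.integral_comp_mul_right (a := 0) (b := ξ)
      (fun s => Real.exp (-(s ^ 2))) hr.ne'
    simp only [zero_mul, smul_eq_mul] at h
    calc ∫ u in (0:ℝ)..ξ, Real.exp (-(r ^ 2) * u ^ 2)
        = ∫ u in (0:ℝ)..ξ, Real.exp (-(u * r) ^ 2) :=
          intervalIntegral.integral_congr (fun u _ => by congr 1; ring)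
      _ = r⁻¹ * ∫ s in (0:ℝ)..(ξ * r), Real.exp (-(s ^ 2)) := h
  rw [hsub, erf]
  ring

end OneDim

/-- Convolution of the harmonic kernel `1/|·|` with the Ewald screening function
`γ_E(y) = ξ³ π^{-3/2} e^{-ξ²|y|²}` equals `erf(ξ|x|)/|x|` for `x ≠ 0`. -/
theorem harmonic_conv_ewald_screening (ξ : ℝ) (hξ : 0 < ξ)
    (γE : EuclideanSpace ℝ (Fin 3) → ℝ)
    (hγE : ∀ y, γE y = ξ ^ 3 * Real.pi ^ (-(3:ℝ)/2) * Real.exp (-(ξ ^ 2 * ‖y‖ ^ 2)))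
    (x : EuclideanSpace ℝ (Fin 3)) (hx : x ≠ 0) :
    (∫ y, γE y / ‖x - y‖) = erf (ξ * ‖x‖) / ‖x‖ := by
  classical
  have hr : (0:ℝ) < ‖x‖ := norm_pos_iff.2 hx
  set C0 : ℝ := ξ ^ 3 * Real.pi ^ (-(3:ℝ)/2) with hC0def
  have hC0 : 0 < C0 := by rw [hC0def]; positivity
  set g : EuclideanSpace ℝ (Fin 3) → ℝ → ℝ := fun y t =>
    (2 / Real.sqrt Real.pi) * (C0 * Real.exp (-(ξ ^ 2 * ‖y‖ ^ 2)) *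
      Real.exp (-(t ^ 2 * ‖x - y‖ ^ 2))) with hgdef
  set f : EuclideanSpace ℝ (Fin 3) → ℝ := fun y =>
    C0 * Real.exp (-(ξ ^ 2 * ‖y‖ ^ 2)) / ‖x - y‖ with hfdef
  set G : ℝ → ℝ := fun t => (2 / Real.sqrt Real.pi) * ξ ^ 3 / (Real.sqrt (ξ ^ 2 + t ^ 2)) ^ 3 *
      Real.exp (-(ξ ^ 2 * t ^ 2 * ‖x‖ ^ 2 / (ξ ^ 2 + t ^ 2))) with hGdef
  have hπ : (0:ℝ) < Real.sqrt Real.pi := Real.sqrt_pos.2 Real.pi_pos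
  -- rewrite the integrand using the explicit formula
  have hintegrand : (fun y => γE y / ‖x - y‖) = f := by
    funext y
    rw [hγE y, hfdef]
  rw [hintegrand]
  -- nonnegativity and measurability of `f`
  have hfnn : 0 ≤ᵐ[volume] f := Filter.Eventually.of_forall fun y => by
    rw [hfdef]; positivity
  have hfm : AEStronglyMeasurable f volume := by
    have hm1 : Measurable fun y : EuclideanSpace ℝ (Fin 3) =>
        C0 * Real.exp (-(ξ ^ 2 * ‖y‖ ^ 2)) := by fun_prop
    have hm2 : Measurable fun y : EuclideanSpace ℝ (Fin 3) => ‖x - y‖ := by fun_prop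
    exact (hm1.div hm2).aestronglyMeasurable
  -- almost every `y` differs from `x`
  have hae : ∀ᵐ y : EuclideanSpace ℝ (Fin 3) ∂volume, y ≠ x := by
    rw [MeasureTheory.ae_iff]
    have : {y : EuclideanSpace ℝ (Fin 3) | ¬ y ≠ x} = {x} := by ext y; simp
    rw [this]
    exact measure_singleton x
  -- the `t`-integral at fixed `y ≠ x`
  have h1int : ∀ y : EuclideanSpace ℝ (Fin 3), y ≠ x →
      IntegrableOn (fun t => g y t) (Set.Ioi 0) := by
    intro y hy
    have hxy : (0:ℝ) < ‖x - y‖ := by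
      rw [norm_pos_iff, sub_ne_zero]; exact hy.symm
    have hc : (0:ℝ) < ‖x - y‖ ^ 2 := by positivity
    have base : IntegrableOn (fun t : ℝ => Real.exp (-(‖x - y‖ ^ 2) * t ^ 2)) (Set.Ioi 0) :=
      integrableOn_Ioi_exp_neg_mul_sq_iff.2 hc
    refine (base.const_mul ((2 / Real.sqrt Real.pi) *
      (C0 * Real.exp (-(ξ ^ 2 * ‖y‖ ^ 2))))).congr (Filter.Eventually.of_forall fun t => ?_)
    rw [hgdef]
    dsimp only
    rw [show -(t ^ 2 * ‖x - y‖ ^ 2) = -(‖x - y‖ ^ 2) * t ^ 2 by ring]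
    ring
  have h1val : ∀ y : EuclideanSpace ℝ (Fin 3), y ≠ x →
      ∫ t in Set.Ioi (0:ℝ), g y t = f y := by
    intro y hy
    have hxy : (0:ℝ) < ‖x - y‖ := by
      rw [norm_pos_iff, sub_ne_zero]; exact hy.symm
    have hgy : (fun t : ℝ => g y t) = fun t =>
        ((2 / Real.sqrt Real.pi) * (C0 * Real.exp (-(ξ ^ 2 * ‖y‖ ^ 2)))) *
          Real.exp (-(‖x - y‖ ^ 2) * t ^ 2) := by
      funext t
      rw [hgdef]
      dsimp only
      rw [show -(t ^ 2 * ‖x - y‖ ^ 2) = -(‖x - y‖ ^ 2) * t ^ 2 by ring]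
      ring
    rw [hgy, MeasureTheory.integral_const_mul, integral_gaussian_Ioi]
    have hsqrt : Real.sqrt (Real.pi / ‖x - y‖ ^ 2) = Real.sqrt Real.pi / ‖x - y‖ := by
      rw [Real.sqrt_div Real.pi_pos.le, Real.sqrt_sq (norm_nonneg _)]
    rw [hsqrt, hfdef]
    field_simp
  -- the `y`-integral at fixed `t`
  have h2int : ∀ t : ℝ, Integrable (fun y => g y t) := by
    intro t
    refine ((gauss3_integrable hξ t x).const_mul
      ((2 / Real.sqrt Real.pi) * C0)).congr (Filter.Eventually.of_forall fun y => ?_)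
    rw [hgdef]
    dsimp only
    ring
  have h2val : ∀ t : ℝ, ∫ y, g y t = G t := by
    intro t
    have hgy : (fun y => g y t) = fun y => ((2 / Real.sqrt Real.pi) * C0) *
        (Real.exp (-(ξ ^ 2 * ‖y‖ ^ 2)) * Real.exp (-(t ^ 2 * ‖x - y‖ ^ 2))) := by
      funext y
      rw [hgdef]
      dsimp only
      ring
    rw [hgy, MeasureTheory.integral_const_mul, gauss3_integral hξ t x]
    have hππ : Real.pi ^ (-(3:ℝ)/2) * Real.pi ^ ((3:ℝ)/2) = 1 := by
      rw [← Real.rpow_add Real.pi_pos]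
      norm_num
    rw [hGdef, hC0def]
    dsimp only
    calc 2 / Real.sqrt Real.pi * (ξ ^ 3 * Real.pi ^ (-(3:ℝ)/2)) *
          (Real.pi ^ ((3:ℝ)/2) / Real.sqrt (ξ ^ 2 + t ^ 2) ^ 3 *
            Real.exp (-(ξ ^ 2 * t ^ 2 * ‖x‖ ^ 2 / (ξ ^ 2 + t ^ 2))))
        = 2 / Real.sqrt Real.pi * ξ ^ 3 / Real.sqrt (ξ ^ 2 + t ^ 2) ^ 3 *
            Real.exp (-(ξ ^ 2 * t ^ 2 * ‖x‖ ^ 2 / (ξ ^ 2 + t ^ 2))) *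
            (Real.pi ^ (-(3:ℝ)/2) * Real.pi ^ ((3:ℝ)/2)) := by ring
      _ = _ := by rw [hππ, mul_one]
  -- nonnegativity of `g` and `G`
  have hgnn : ∀ y t, 0 ≤ g y t := fun y t => by rw [hgdef]; dsimp only; positivity
  have hGnn : ∀ t, 0 ≤ G t := fun t => by rw [hGdef]; dsimp only; positivity
  -- measurability of `g` on the product space
  have hgcont : Continuous (fun p : (EuclideanSpace ℝ (Fin 3)) × ℝ => g p.1 p.2) := by
    rw [hgdef]
    fun_prop
  have hmeas : AEMeasurable (Function.uncurry fun y t => ENNReal.ofReal (g y t))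
      (volume.prod (volume.restrict (Set.Ioi 0))) := by
    exact (hgcont.measurable.ennreal_ofReal).aemeasurable
  -- the one-dimensional result
  obtain ⟨hGint, hGval⟩ := oneDim_integral hξ hr
  -- main computation via nonnegative (Lebesgue) integrals
  have key : ∫⁻ y, ENNReal.ofReal (f y) = ENNReal.ofReal (erf (ξ * ‖x‖) / ‖x‖) := by
    calc ∫⁻ y, ENNReal.ofReal (f y)
        = ∫⁻ y, ∫⁻ t in Set.Ioi 0, ENNReal.ofReal (g y t) := by
          refine lintegral_congr_ae (hae.mono fun y hy => ?_)
          dsimp only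
          rw [← MeasureTheory.ofReal_integral_eq_lintegral_ofReal (h1int y hy)
            (Filter.Eventually.of_forall fun t => hgnn y t), h1val y hy]
      _ = ∫⁻ t in Set.Ioi 0, ∫⁻ y, ENNReal.ofReal (g y t) :=
          lintegral_lintegral_swap hmeas
      _ = ∫⁻ t in Set.Ioi 0, ENNReal.ofReal (G t) := by
          refine setLIntegral_congr_fun measurableSet_Ioi
            (fun t _ => ?_)
          rw [← MeasureTheory.ofReal_integral_eq_lintegral_ofReal (h2int t)
            (Filter.Eventually.of_forall fun y => hgnn y t), h2val t]
      _ = ENNReal.ofReal (∫ t in Set.Ioi 0, G t) :=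
          (MeasureTheory.ofReal_integral_eq_lintegral_ofReal hGint
            (Filter.Eventually.of_forall fun t => hGnn t)).symm
      _ = ENNReal.ofReal (erf (ξ * ‖x‖) / ‖x‖) := by rw [hGval]
  have herfnn : 0 ≤ erf (ξ * ‖x‖) / ‖x‖ := by
    apply div_nonneg _ (norm_nonneg x)
    rw [erf]
    apply mul_nonneg (by positivity)
    exact intervalIntegral.integral_nonneg (by positivity) fun s _ => (Real.exp_pos _).le
  rw [MeasureTheory.integral_eq_lintegral_of_nonneg_ae hfnn hfm, key,
    ENNReal.toReal_ofReal herfnn]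
end

section
/- Let ξ > 0 and define, for r ∈ ℝ³ \ {0} and j, l ∈ {1,2,3}, the real-space stokeslet S^R_{jl}(r; ξ) = (δ_{jl} + r_j r_l/|r|²) (erfc(ξ|r|)/|r| + 2ξ e^{-ξ²|r|²}/√π) − δ_{jl} · 4ξ e^{-ξ²|r|²}/√π, and the stokeslet S_{jl}(r) = δ_{jl}/|r| + r_j r_l/|r|³. Then the limit as r → 0 of the difference exists and equals lim_{r→0} (S^R_{jl}(r; ξ) − S_{jl}(r)) = −(4ξ/√π) δ_{jl}. -/
open MeasureTheory

/-- The complementary error function `erfc t = 1 − erf t`. -/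
noncomputable def erfc (t : ℝ) : ℝ := 1 - erf t

lemma aux_integral_div_tendsto :
    Filter.Tendsto (fun u : ℝ => (∫ s in (0:ℝ)..u, Real.exp (-(s ^ 2))) / u)
      (nhdsWithin 0 {(0:ℝ)}ᶜ) (nhds 1) := by
  have hc : Continuous fun s : ℝ => Real.exp (-(s ^ 2)) := by continuity
  have hd : HasDerivAt (fun u : ℝ => ∫ s in (0:ℝ)..u, Real.exp (-(s ^ 2)))
      (Real.exp (-(0:ℝ) ^ 2)) 0 := (hc.integral_hasStrictDerivAt 0 0).hasDerivAt
  have h0 : Real.exp (-(0:ℝ) ^ 2) = 1 := by norm_num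
  rw [h0] at hd
  have := hasDerivAt_iff_tendsto_slope.mp hd
  refine this.congr' ?_
  filter_upwards [self_mem_nhdsWithin] with u hu
  simp [slope_def_field, div_eq_inv_mul]

lemma aux_G_tendsto (ξ : ℝ) (hξ : 0 < ξ) :
    Filter.Tendsto (fun t : ℝ => (erfc (ξ * t) - 1) / t
        + 2 * ξ * Real.exp (-(ξ ^ 2 * t ^ 2)) / Real.sqrt Real.pi)
      (nhdsWithin 0 {(0:ℝ)}ᶜ) (nhds 0) := by
  have hπ : (0:ℝ) < Real.sqrt Real.pi := Real.sqrt_pos.mpr Real.pi_pos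
  have hmul : Filter.Tendsto (fun t : ℝ => ξ * t) (nhdsWithin 0 {(0:ℝ)}ᶜ)
      (nhdsWithin 0 {(0:ℝ)}ᶜ) := by
    rw [tendsto_nhdsWithin_iff]
    constructor
    · have h : Filter.Tendsto (fun t : ℝ => ξ * t) (nhds 0) (nhds (ξ * 0)) :=
        (continuous_const.mul continuous_id).tendsto 0
      simpa using h.mono_left (nhdsWithin_le_nhds (s := {(0:ℝ)}ᶜ))
    · filter_upwards [self_mem_nhdsWithin] with t ht
      simp only [Set.mem_compl_iff, Set.mem_singleton_iff] at ht ⊢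
      exact mul_ne_zero hξ.ne' ht
  have h1 : Filter.Tendsto
      (fun t : ℝ => (∫ s in (0:ℝ)..(ξ * t), Real.exp (-(s ^ 2))) / (ξ * t))
      (nhdsWithin 0 {(0:ℝ)}ᶜ) (nhds 1) := aux_integral_div_tendsto.comp hmul
  have h2 : Filter.Tendsto (fun t : ℝ => Real.exp (-(ξ ^ 2 * t ^ 2)))
      (nhdsWithin 0 {(0:ℝ)}ᶜ) (nhds 1) := by
    have hc : Continuous fun t : ℝ => Real.exp (-(ξ ^ 2 * t ^ 2)) := by continuity
    have h := (hc.tendsto 0).mono_left (nhdsWithin_le_nhds (s := {(0:ℝ)}ᶜ))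
    simpa using h
  have key : Filter.Tendsto
      (fun t : ℝ => (-(2 * ξ / Real.sqrt Real.pi)) *
          ((∫ s in (0:ℝ)..(ξ * t), Real.exp (-(s ^ 2))) / (ξ * t))
        + 2 * ξ * Real.exp (-(ξ ^ 2 * t ^ 2)) / Real.sqrt Real.pi)
      (nhdsWithin 0 {(0:ℝ)}ᶜ)
      (nhds ((-(2 * ξ / Real.sqrt Real.pi)) * 1 + 2 * ξ * 1 / Real.sqrt Real.pi)) :=
    (h1.const_mul _).add ((h2.const_mul (2 * ξ)).div_const _)
  have heq : (-(2 * ξ / Real.sqrt Real.pi)) * 1 + 2 * ξ * 1 / Real.sqrt Real.pi = 0 := by ring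
  rw [heq] at key
  refine key.congr' ?_
  filter_upwards [self_mem_nhdsWithin] with t ht
  simp only [Set.mem_compl_iff, Set.mem_singleton_iff] at ht
  have hξt : ξ * t ≠ 0 := mul_ne_zero hξ.ne' ht
  unfold erfc erf
  field_simp
  ring

lemma aux_coord_le (r : EuclideanSpace ℝ (Fin 3)) (j : Fin 3) : |r j| ≤ ‖r‖ := by
  rw [EuclideanSpace.norm_eq, ← Real.sqrt_sq_eq_abs]
  refine Real.sqrt_le_sqrt ?_
  have h : ‖r j‖ ^ 2 ≤ ∑ i, ‖r i‖ ^ 2 :=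
    Finset.single_le_sum (f := fun i => ‖r i‖ ^ 2) (fun i _ => by positivity)
      (Finset.mem_univ j)
  simpa [Real.norm_eq_abs, sq_abs] using h

lemma aux_alg (δ ξ n a c E : ℝ) (hn : n ≠ 0) :
    (δ + a / n ^ 2) * ((c - 1) / n + 2 * ξ * E / Real.sqrt Real.pi)
      - δ * (4 * ξ * E / Real.sqrt Real.pi)
    = (δ + a / n ^ 2) * (c / n + 2 * ξ * E / Real.sqrt Real.pi)
        - δ * (4 * ξ * E / Real.sqrt Real.pi) - (δ / n + a / n ^ 3) := by
  have h2 : (δ + a / n ^ 2) * ((c - 1) / n) = (δ + a / n ^ 2) * (c / n)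
      - (δ / n + a / n ^ 3) := by
    field_simp
  rw [mul_add, mul_add, h2]
  ring

/-- The self-interaction limit of the Ewald decomposition of the stokeslet:
`lim_{r→0} (S^R_{jl}(r;ξ) − S_{jl}(r)) = −(4ξ/√π) δ_{jl}`. -/
theorem stokeslet_self_interaction_limit (ξ : ℝ) (hξ : 0 < ξ) (j l : Fin 3) :
    Filter.Tendsto
      (fun r : EuclideanSpace ℝ (Fin 3) =>
        (((if j = l then (1:ℝ) else 0) + r j * r l / ‖r‖ ^ 2) *
            (erfc (ξ * ‖r‖) / ‖r‖ + 2 * ξ * Real.exp (-(ξ ^ 2 * ‖r‖ ^ 2)) / Real.sqrt Real.pi)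
          - (if j = l then (1:ℝ) else 0) *
              (4 * ξ * Real.exp (-(ξ ^ 2 * ‖r‖ ^ 2)) / Real.sqrt Real.pi))
        - ((if j = l then (1:ℝ) else 0) / ‖r‖ + r j * r l / ‖r‖ ^ 3))
      (nhdsWithin 0 {(0 : EuclideanSpace ℝ (Fin 3))}ᶜ)
      (nhds (-(4 * ξ / Real.sqrt Real.pi) * (if j = l then (1:ℝ) else 0))) := by
  have hπ : (0:ℝ) < Real.sqrt Real.pi := Real.sqrt_pos.mpr Real.pi_pos
  obtain ⟨δ, hδ⟩ : ∃ δ : ℝ, δ = if j = l then (1:ℝ) else 0 := ⟨_, rfl⟩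
  rw [← hδ]
  set G : ℝ → ℝ := fun t => (erfc (ξ * t) - 1) / t
      + 2 * ξ * Real.exp (-(ξ ^ 2 * t ^ 2)) / Real.sqrt Real.pi with hG
  have hnorm : Filter.Tendsto (fun r : EuclideanSpace ℝ (Fin 3) => ‖r‖)
      (nhdsWithin 0 {(0 : EuclideanSpace ℝ (Fin 3))}ᶜ) (nhdsWithin 0 {(0:ℝ)}ᶜ) := by
    rw [tendsto_nhdsWithin_iff]
    constructor
    · have h := (continuous_norm.tendsto (0 : EuclideanSpace ℝ (Fin 3))).mono_left
        (nhdsWithin_le_nhds (s := {(0 : EuclideanSpace ℝ (Fin 3))}ᶜ))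
      simpa using h
    · filter_upwards [self_mem_nhdsWithin] with r hr
      simp only [Set.mem_compl_iff, Set.mem_singleton_iff] at hr ⊢
      exact norm_ne_zero_iff.mpr hr
  have hGlim : Filter.Tendsto (fun r : EuclideanSpace ℝ (Fin 3) => G ‖r‖)
      (nhdsWithin 0 {(0 : EuclideanSpace ℝ (Fin 3))}ᶜ) (nhds 0) :=
    (aux_G_tendsto ξ hξ).comp hnorm
  -- first piece tends to 0
  have hfirst : Filter.Tendsto
      (fun r : EuclideanSpace ℝ (Fin 3) => (δ + r j * r l / ‖r‖ ^ 2) * G ‖r‖)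
      (nhdsWithin 0 {(0 : EuclideanSpace ℝ (Fin 3))}ᶜ) (nhds 0) := by
    have hbound : ∀ r : EuclideanSpace ℝ (Fin 3),
        ‖(δ + r j * r l / ‖r‖ ^ 2) * G ‖r‖‖ ≤ 2 * ‖G ‖r‖‖ := by
      intro r
      rw [norm_mul]
      gcongr
      have hb : |r j * r l / ‖r‖ ^ 2| ≤ 1 := by
        rcases eq_or_ne r 0 with h | h
        · simp [h]
        · have hn : (0:ℝ) < ‖r‖ := norm_pos_iff.mpr h
          rw [abs_div, abs_mul, abs_of_pos (by positivity : (0:ℝ) < ‖r‖ ^ 2),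
            div_le_one (by positivity)]
          calc |r j| * |r l| ≤ ‖r‖ * ‖r‖ :=
                mul_le_mul (aux_coord_le r j) (aux_coord_le r l) (abs_nonneg _) hn.le
            _ = ‖r‖ ^ 2 := (sq ‖r‖).symm
      have hδ1 : |δ| ≤ 1 := by rw [hδ]; split <;> norm_num
      calc ‖δ + r j * r l / ‖r‖ ^ 2‖ ≤ |δ| + |r j * r l / ‖r‖ ^ 2| := abs_add_le _ _
        _ ≤ 1 + 1 := add_le_add hδ1 hb
        _ = 2 := by norm_num
    have h2 : Filter.Tendsto (fun r : EuclideanSpace ℝ (Fin 3) => 2 * ‖G ‖r‖‖)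
        (nhdsWithin 0 {(0 : EuclideanSpace ℝ (Fin 3))}ᶜ) (nhds 0) := by
      have := hGlim.norm.const_mul (2:ℝ)
      simpa using this
    exact squeeze_zero_norm hbound h2
  -- second piece
  have hsecond : Filter.Tendsto
      (fun r : EuclideanSpace ℝ (Fin 3) =>
        δ * (4 * ξ * Real.exp (-(ξ ^ 2 * ‖r‖ ^ 2)) / Real.sqrt Real.pi))
      (nhdsWithin 0 {(0 : EuclideanSpace ℝ (Fin 3))}ᶜ)
      (nhds (δ * (4 * ξ / Real.sqrt Real.pi))) := by
    have hc : Continuous fun r : EuclideanSpace ℝ (Fin 3) =>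
        δ * (4 * ξ * Real.exp (-(ξ ^ 2 * ‖r‖ ^ 2)) / Real.sqrt Real.pi) := by
      refine continuous_const.mul ?_
      refine Continuous.div_const ?_ _
      exact continuous_const.mul (Real.continuous_exp.comp (by continuity))
    have h := (hc.tendsto 0).mono_left
      (nhdsWithin_le_nhds (s := {(0 : EuclideanSpace ℝ (Fin 3))}ᶜ))
    simpa using h
  have key := hfirst.sub hsecond
  rw [zero_sub] at key
  have hval : -(δ * (4 * ξ / Real.sqrt Real.pi))
      = -(4 * ξ / Real.sqrt Real.pi) * δ := by ring
  rw [hval] at key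
  refine key.congr' ?_
  filter_upwards [self_mem_nhdsWithin] with r hr
  simp only [Set.mem_compl_iff, Set.mem_singleton_iff] at hr
  have hn : ‖r‖ ≠ 0 := norm_ne_zero_iff.mpr hr
  simp only [hG]
  exact aux_alg δ ξ ‖r‖ (r j * r l) (erfc (ξ * ‖r‖)) (Real.exp (-(ξ ^ 2 * ‖r‖ ^ 2))) hn
end

section
/- Let R > 0. For every κ ∈ ℝ³ with κ ≠ 0, writing k = |κ|, the Fourier transform of the optimally gauged truncated biharmonic kernel satisfies ∫_{|r| ≤ R} (|r| − R/2 − |r|²/(2R)) e^{-i κ·r} dr = −(8π/k⁴) ( 1 + (1/2) cos(R k) − (3/2) sin(R k)/(R k) ), and at κ = 0 one has ∫_{|r| ≤ R} (|r| − R/2 − |r|²/(2R)) dr = −π R⁴/15. -/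
open MeasureTheory Real

noncomputable def tobfG (R r : ℝ) : ℝ := r - R/2 - r^2/(2*R)
noncomputable def tobfQ (R t : ℝ) : ℝ := -R^3/12 + R/2*t^2 - 2/3*|t|^3 + t^4/(4*R)
lemma tobfG_cont (R : ℝ) : Continuous (tobfG R) := by unfold tobfG; fun_prop


lemma tobfQ_neg (R t : ℝ) : tobfQ R (-t) = tobfQ R t := by
  simp only [tobfQ, abs_neg]; ring

lemma tobfQ_cont (R : ℝ) : Continuous (tobfQ R) := by
  unfold tobfQ; fun_prop

lemma hasDerivAt_poly (c0 c1 c2 c3 c4 t : ℝ) :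
    HasDerivAt (fun t : ℝ => c0 + c1*t + c2*t^2 + c3*t^3 + c4*t^4)
      (c1 + 2*c2*t + 3*c3*t^2 + 4*c4*t^3) t := by
  have h := (((((hasDerivAt_const t c0).add (((hasDerivAt_id t).const_mul c1))).add
      ((hasDerivAt_pow 2 t).const_mul c2)).add ((hasDerivAt_pow 3 t).const_mul c3)).add
      ((hasDerivAt_pow 4 t).const_mul c4))
  refine h.congr_deriv (Eq.symm ?_)
  push_cast; ring

lemma hasDerivAt_trig (k t : ℝ) :
    HasDerivAt (fun t : ℝ => Real.sin (k*t)) (k * Real.cos (k*t)) t ∧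
    HasDerivAt (fun t : ℝ => Real.cos (k*t)) (-(k * Real.sin (k*t))) t := by
  constructor
  · have := (Real.hasDerivAt_sin (k*t)).comp t ((hasDerivAt_id t).const_mul k); simp [mul_comm] at this; exact this
  · have := (Real.hasDerivAt_cos (k*t)).comp t ((hasDerivAt_id t).const_mul k); simp [mul_comm] at this; exact this

lemma hasDerivAt_Phi (k s0 s1 s2 s3 s4 c0 c1 c2 c3 c4 t : ℝ) :
    HasDerivAt (fun t : ℝ => Real.sin (k*t) * (s0 + s1*t + s2*t^2 + s3*t^3 + s4*t^4)
        + Real.cos (k*t) * (c0 + c1*t + c2*t^2 + c3*t^3 + c4*t^4))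
      (k * Real.cos (k*t) * (s0 + s1*t + s2*t^2 + s3*t^3 + s4*t^4)
        + Real.sin (k*t) * (s1 + 2*s2*t + 3*s3*t^2 + 4*s4*t^3)
        - k * Real.sin (k*t) * (c0 + c1*t + c2*t^2 + c3*t^3 + c4*t^4)
        + Real.cos (k*t) * (c1 + 2*c2*t + 3*c3*t^2 + 4*c4*t^3)) t := by
  have h := ((hasDerivAt_trig k t).1.mul (hasDerivAt_poly s0 s1 s2 s3 s4 t)).add
    ((hasDerivAt_trig k t).2.mul (hasDerivAt_poly c0 c1 c2 c3 c4 t))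
  refine h.congr_deriv (Eq.symm ?_)
  ring

lemma ftc_cos (k a0 a2 a3 a4 : ℝ) (hk : k ≠ 0) (x : ℝ) :
    ∫ t in (0:ℝ)..x, (a0 + a2*t^2 + a3*t^3 + a4*t^4) * Real.cos (k*t)
      = Real.sin (k*x) * ((a0/k - 2*a2/k^3 + 24*a4/k^5) + (-6*a3/k^3)*x
          + (a2/k - 12*a4/k^3)*x^2 + (a3/k)*x^3 + (a4/k)*x^4)
        + Real.cos (k*x) * ((-6*a3/k^4) + (2*a2/k^2 - 24*a4/k^4)*x
          + (3*a3/k^2)*x^2 + (4*a4/k^2)*x^3 + 0*x^4)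
        - (-6*a3/k^4) := by
  set s0 := a0/k - 2*a2/k^3 + 24*a4/k^5
  set s1 := -6*a3/k^3
  set s2 := a2/k - 12*a4/k^3
  set s3 := a3/k
  set s4 := a4/k
  set c0 := -6*a3/k^4
  set c1 := 2*a2/k^2 - 24*a4/k^4
  set c2 := 3*a3/k^2
  set c3 := 4*a4/k^2
  have key : ∀ t : ℝ,
      k * Real.cos (k*t) * (s0 + s1*t + s2*t^2 + s3*t^3 + s4*t^4)
        + Real.sin (k*t) * (s1 + 2*s2*t + 3*s3*t^2 + 4*s4*t^3)
        - k * Real.sin (k*t) * (c0 + c1*t + c2*t^2 + c3*t^3 + (0:ℝ)*t^4)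
        + Real.cos (k*t) * (c1 + 2*c2*t + 3*c3*t^2 + 4*(0:ℝ)*t^3)
      = (a0 + a2*t^2 + a3*t^3 + a4*t^4) * Real.cos (k*t) := by
    intro t
    simp only [s0, s1, s2, s3, s4, c0, c1, c2, c3]
    field_simp
    ring
  have h := intervalIntegral.integral_eq_sub_of_hasDerivAt
    (f := fun t : ℝ => Real.sin (k*t) * (s0 + s1*t + s2*t^2 + s3*t^3 + s4*t^4)
        + Real.cos (k*t) * (c0 + c1*t + c2*t^2 + c3*t^3 + (0:ℝ)*t^4))
    (fun t _ => key t ▸ hasDerivAt_Phi k s0 s1 s2 s3 s4 c0 c1 c2 c3 0 t)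
    (Continuous.intervalIntegrable (by fun_prop) 0 x)
  rw [h]
  simp

lemma hasDerivAt_poly5 (c1 c3 c4 c5 t : ℝ) :
    HasDerivAt (fun t : ℝ => c1*t + c3*t^3 + c4*t^4 + c5*t^5)
      (c1 + 3*c3*t^2 + 4*c4*t^3 + 5*c5*t^4) t := by
  have h := ((((hasDerivAt_id t).const_mul c1).add ((hasDerivAt_pow 3 t).const_mul c3)).add
      ((hasDerivAt_pow 4 t).const_mul c4)).add ((hasDerivAt_pow 5 t).const_mul c5)
  refine h.congr_deriv (Eq.symm ?_)
  push_cast; ring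

lemma reflect_integral {E : Type*} [NormedAddCommGroup E] [NormedSpace ℝ E]
    (R : ℝ) (f : ℝ → E) (hf : Continuous f) :
    ∫ t in (-R)..R, f t = ∫ t in (0:ℝ)..R, (f t + f (-t)) := by
  have h1 : IntervalIntegrable f volume (-R) 0 := hf.intervalIntegrable _ _
  have h2 : IntervalIntegrable f volume 0 R := hf.intervalIntegrable _ _
  rw [← intervalIntegral.integral_add_adjacent_intervals h1 h2]
  have h3 : ∫ t in (-R)..(0:ℝ), f t = ∫ t in (0:ℝ)..R, f (-t) := by
    rw [intervalIntegral.integral_comp_neg]; simp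
  have h4 : IntervalIntegrable (fun t => f (-t)) volume 0 R :=
    (hf.comp continuous_neg).intervalIntegrable _ _
  rw [h3, ← intervalIntegral.integral_add h4 h2]
  apply intervalIntegral.integral_congr
  intro t _
  exact add_comm _ _

lemma oneD0 (R : ℝ) (hR : 0 < R) : ∫ t in (-R)..R, tobfQ R t = -R^4/15 := by
  rw [reflect_integral R _ (tobfQ_cont R)]
  have hcg : ∀ t ∈ Set.uIcc (0:ℝ) R, tobfQ R t + tobfQ R (-t)
      = 2*(-R^3/12) + 3*(2*(R/2)/3)*t^2 + 4*(2*(-(2/3))/4)*t^3 + 5*(2*(1/(4*R))/5)*t^4 := by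
    intro t ht
    rw [Set.uIcc_of_le hR.le] at ht
    rw [tobfQ_neg]
    simp only [tobfQ, abs_of_nonneg ht.1]
    ring
  rw [intervalIntegral.integral_congr hcg]
  rw [intervalIntegral.integral_eq_sub_of_hasDerivAt
    (f := fun t => (2*(-R^3/12))*t + (2*(R/2)/3)*t^3 + (2*(-(2/3))/4)*t^4 + (2*(1/(4*R))/5)*t^5)
    (fun t _ => by simpa using hasDerivAt_poly5 (2*(-R^3/12)) (2*(R/2)/3) (2*(-(2/3))/4) (2*(1/(4*R))/5) t)
    (Continuous.intervalIntegrable (by fun_prop) 0 R)]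
  have hR' : R ≠ 0 := hR.ne'
  field_simp
  ring

lemma exp_add_exp_neg (x : ℝ) :
    Complex.exp (Complex.I * (x:ℂ)) + Complex.exp (-(Complex.I * (x:ℂ)))
      = ((2 * Real.cos x : ℝ) : ℂ) := by
  have h1 : Complex.I * (x:ℂ) = (x:ℂ) * Complex.I := mul_comm _ _
  have h2 : -(Complex.I * (x:ℂ)) = ((-x : ℝ):ℂ) * Complex.I := by push_cast; ring
  rw [h2, h1, Complex.exp_mul_I, Complex.exp_mul_I]
  push_cast
  simp [Complex.cos_neg, Complex.sin_neg, ← Complex.ofReal_cos]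
  ring

lemma oneD (R k : ℝ) (hR : 0 < R) (hk : k ≠ 0) :
    ∫ t in (-R)..R, (tobfQ R t : ℂ) * Complex.exp (-(Complex.I * ((k*t : ℝ) : ℂ)))
      = ((-(8/k^4) * (1 + 1/2*Real.cos (R*k) - 3/2*Real.sin (R*k)/(R*k)) : ℝ) : ℂ) := by
  have hcont : Continuous (fun t : ℝ => (tobfQ R t : ℂ) * Complex.exp (-(Complex.I * ((k*t : ℝ) : ℂ)))) := by
    apply Continuous.mul
    · exact Complex.continuous_ofReal.comp (tobfQ_cont R)
    · exact Complex.continuous_exp.comp (by fun_prop)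
  rw [reflect_integral R _ hcont]
  have hcg : Set.EqOn (fun t => (tobfQ R t : ℂ) * Complex.exp (-(Complex.I * ((k*t : ℝ) : ℂ)))
        + (tobfQ R (-t) : ℂ) * Complex.exp (-(Complex.I * ((k*(-t) : ℝ) : ℂ))))
      (fun t => ((tobfQ R t * (2 * Real.cos (k*t)) : ℝ) : ℂ)) (Set.uIcc 0 R) := by
    intro t _
    simp only [tobfQ_neg]
    have h2 : -(Complex.I * ((k*(-t) : ℝ) : ℂ)) = Complex.I * ((k*t : ℝ):ℂ) := by push_cast; ring
    rw [h2]
    have h3 := exp_add_exp_neg (k*t)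
    push_cast at h3 ⊢
    linear_combination ((tobfQ R t : ℂ)) * h3
  rw [intervalIntegral.integral_congr hcg, intervalIntegral.integral_ofReal]
  rw [Complex.ofReal_inj]
  have hcg2 : Set.EqOn (fun t => tobfQ R t * (2 * Real.cos (k*t)))
      (fun t => 2 * (((-R^3/12) + (R/2)*t^2 + (-(2/3))*t^3 + (1/(4*R))*t^4) * Real.cos (k*t)))
      (Set.uIcc 0 R) := by
    intro t ht
    rw [Set.uIcc_of_le hR.le] at ht
    simp only [tobfQ, abs_of_nonneg ht.1]
    ring
  rw [intervalIntegral.integral_congr hcg2, intervalIntegral.integral_const_mul,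
    ftc_cos k (-R^3/12) (R/2) (-(2/3)) (1/(4*R)) hk R]
  rw [mul_comm R k]
  have hR' : R ≠ 0 := hR.ne'
  field_simp
  ring



lemma hasDerivAt_H (R t s : ℝ) (hR : R ≠ 0) (ht : t ≠ 0) :
    HasDerivAt (fun s => Real.sqrt (t^2+s^2)^3/3 - R/4*(t^2+s^2) - (t^2+s^2)^2/(8*R))
      (s * tobfG R (Real.sqrt (t^2+s^2))) s := by
  have hv : (0:ℝ) < t^2 + s^2 := by positivity
  have hinner : HasDerivAt (fun s : ℝ => t^2 + s^2) (2*s) s := by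
    have := (hasDerivAt_const s (t^2)).add (hasDerivAt_pow 2 s); simp at this; exact this
  have hsqrt : HasDerivAt (fun s : ℝ => Real.sqrt (t^2+s^2))
      (1/(2*Real.sqrt (t^2+s^2)) * (2*s)) s :=
    (Real.hasDerivAt_sqrt hv.ne').comp s hinner
  have h := (((hsqrt.pow 3).div_const 3).sub (hinner.const_mul (R/4))).sub
    ((hinner.pow 2).div_const (8*R))
  refine h.congr_deriv (Eq.symm ?_)
  have hu0 : Real.sqrt (t^2+s^2) ≠ 0 := (Real.sqrt_pos.2 hv).ne'
  have hu2 : Real.sqrt (t^2+s^2) ^ 2 = t^2 + s^2 := Real.sq_sqrt hv.le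
  rw [← hu2]
  unfold tobfG
  field_simp
  rw [Real.sqrt_sq (Real.sqrt_nonneg _)]
  linear_combination (0:ℝ) * hu2

lemma lemA (R : ℝ) (hR : 0 < R) (t : ℝ) (ht : t ≠ 0) :
    ∫ q : ℝ × ℝ, Set.indicator {q : ℝ × ℝ | t^2 + q.1^2 + q.2^2 ≤ R^2}
        (fun q => tobfG R (Real.sqrt (t^2 + q.1^2 + q.2^2))) q
      = Set.indicator (Set.Icc (-R) R) (fun t => Real.pi * tobfQ R t) t := by
  by_cases htR : |t| ≤ R
  · -- main case
    rw [Set.indicator_of_mem (by rw [Set.mem_Icc]; exact abs_le.1 htR)]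
    rw [← integral_comp_polarCoord_symm]
    have hkey : ∀ p : ℝ × ℝ, t^2 + (p.1 * Real.cos p.2)^2 + (p.1 * Real.sin p.2)^2
        = t^2 + p.1^2 := by
      intro p
      linear_combination p.1^2 * (Real.sin_sq_add_cos_sq p.2)
    set F : ℝ → ℝ := fun s => Set.indicator {s : ℝ | t^2 + s^2 ≤ R^2}
      (fun s => s * tobfG R (Real.sqrt (t^2 + s^2))) s with hF
    set G : ℝ → ℝ := fun _ => (1:ℝ) with hG
    have hstep1 : ∀ p : ℝ × ℝ,
        p.1 • Set.indicator {q : ℝ × ℝ | t^2 + q.1^2 + q.2^2 ≤ R^2}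
          (fun q => tobfG R (Real.sqrt (t^2 + q.1^2 + q.2^2))) (polarCoord.symm p)
        = F p.1 * G p.2 := by
      intro p
      simp only [hF, hG, Set.indicator_apply, polarCoord_symm_apply, Set.mem_setOf_eq, hkey p,
        smul_eq_mul, mul_one]
      by_cases hc : t^2 + p.1^2 ≤ R^2
      · simp [hc]
      · simp [hc]
    rw [polarCoord_target]
    rw [setIntegral_congr_fun (measurableSet_Ioi.prod measurableSet_Ioo) (fun p _ => hstep1 p)]
    rw [Measure.volume_eq_prod, setIntegral_prod_mul F G]
    have hone : ∫ θ in Set.Ioo (-Real.pi) Real.pi, G θ = 2 * Real.pi := by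
      simp only [hG]
      rw [setIntegral_const]
      simp [Real.volume_Ioo]
      rw [max_eq_left (by positivity)]
      ring
    rw [hone]
    simp only [hF]
    have hmeas : MeasurableSet {s : ℝ | t^2 + s^2 ≤ R^2} :=
      (isClosed_le (by fun_prop) continuous_const).measurableSet
    rw [setIntegral_indicator hmeas]
    have hc0 : (0:ℝ) ≤ R^2 - t^2 := by nlinarith [abs_le.1 htR, abs_nonneg t]
    have hset : Set.Ioi (0:ℝ) ∩ {s : ℝ | t^2 + s^2 ≤ R^2} = Set.Ioc 0 (Real.sqrt (R^2 - t^2)) := by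
      ext s
      simp only [Set.mem_inter_iff, Set.mem_Ioi, Set.mem_setOf_eq, Set.mem_Ioc]
      constructor
      · rintro ⟨h1, h2⟩
        refine ⟨h1, ?_⟩
        rw [show s = Real.sqrt (s^2) from (Real.sqrt_sq h1.le).symm]
        exact Real.sqrt_le_sqrt (by linarith)
      · rintro ⟨h1, h2⟩
        refine ⟨h1, ?_⟩
        have := Real.sq_sqrt hc0
        nlinarith [Real.sqrt_nonneg (R^2 - t^2), sq_nonneg s]
    rw [hset, ← intervalIntegral.integral_of_le (Real.sqrt_nonneg _)]
    rw [intervalIntegral.integral_eq_sub_of_hasDerivAt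
      (f := fun s => Real.sqrt (t^2+s^2)^3/3 - R/4*(t^2+s^2) - (t^2+s^2)^2/(8*R))
      (fun s _ => hasDerivAt_H R t s hR.ne' ht)
      (Continuous.intervalIntegrable (by have := tobfG_cont R; continuity) 0 _)]
    have e1 : t^2 + Real.sqrt (R^2 - t^2)^2 = R^2 := by
      rw [Real.sq_sqrt hc0]; ring
    have e2 : t^2 + (0:ℝ)^2 = t^2 := by ring
    rw [e1, e2, Real.sqrt_sq hR.le, Real.sqrt_sq_eq_abs]
    have hR' : R ≠ 0 := hR.ne'
    unfold tobfQ
    field_simp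
    ring
  · -- |t| > R : both sides 0
    push_neg at htR
    rw [Set.indicator_of_notMem (by rw [Set.mem_Icc]; intro h; exact absurd (abs_le.2 h) (not_le.2 htR))]
    have : ∀ q : ℝ × ℝ, Set.indicator {q : ℝ × ℝ | t^2 + q.1^2 + q.2^2 ≤ R^2}
        (fun q => tobfG R (Real.sqrt (t^2 + q.1^2 + q.2^2))) q = 0 := by
      intro q
      apply Set.indicator_of_notMem
      simp only [Set.mem_setOf_eq, not_le]
      have : R^2 < t^2 := by nlinarith [abs_nonneg t, sq_abs t]
      nlinarith [sq_nonneg q.1, sq_nonneg q.2]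
    simp only [this, integral_zero]
lemma tobf_core (R : ℝ) (hR : 0 < R) (k : ℝ) :
    ∫ r in Metric.closedBall (0 : EuclideanSpace ℝ (Fin 3)) R,
        (tobfG R ‖r‖ : ℂ) * Complex.exp (-(Complex.I * ((k * r 0 : ℝ) : ℂ)))
      = (Real.pi : ℂ) *
          ∫ t in (-R)..R, (tobfQ R t : ℂ) * Complex.exp (-(Complex.I * ((k * t : ℝ) : ℂ))) := by
  set f : EuclideanSpace ℝ (Fin 3) → ℂ :=
    fun r => (tobfG R ‖r‖ : ℂ) * Complex.exp (-(Complex.I * ((k * r 0 : ℝ) : ℂ))) with hf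
  rw [← integral_indicator measurableSet_closedBall]
  set e1 := (MeasurableEquiv.toLp 2 (Fin 3 → ℝ)).symm with he1
  set e2 := MeasurableEquiv.piFinSuccAbove (fun _ : Fin 3 => ℝ) 0 with he2
  set e3 := (MeasurableEquiv.refl ℝ).prodCongr (MeasurableEquiv.finTwoArrow (α := ℝ)).symm with he3
  have h1 := (EuclideanSpace.volume_preserving_symm_measurableEquiv_toLp (Fin 3)).symm
  have h2 := (volume_preserving_piFinSuccAbove (fun _ : Fin 3 => ℝ) 0).symm
  have h3 : MeasurePreserving (⇑e3) volume volume := by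
    rw [he3, Measure.volume_eq_prod, Measure.volume_eq_prod]
    exact (MeasurePreserving.id volume).prod (volume_preserving_finTwoArrow ℝ).symm
  set FF : EuclideanSpace ℝ (Fin 3) → ℂ := (Metric.closedBall (0:EuclideanSpace ℝ (Fin 3)) R).indicator f with hFF
  have step1 : ∫ x, FF x = ∫ z : ℝ × (ℝ × ℝ), FF (e1.symm (e2.symm (e3 z))) := by
    have c1 : ∫ x, FF x = ∫ v, FF (e1.symm v) :=
      (h1.integral_comp e1.symm.measurableEmbedding FF).symm
    have c2 : ∫ v, FF (e1.symm v) = ∫ p, FF (e1.symm (e2.symm p)) :=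
      (h2.integral_comp e2.symm.measurableEmbedding (fun v => FF (e1.symm v))).symm
    have c3 : ∫ p : ℝ × (Fin 2 → ℝ), FF (e1.symm (e2.symm p))
        = ∫ z, FF (e1.symm (e2.symm (e3 z))) :=
      (h3.integral_comp e3.measurableEmbedding (fun p => FF (e1.symm (e2.symm p)))).symm
    rw [c1, c2, c3]
  have key : ∀ z : ℝ × (ℝ × ℝ), FF (e1.symm (e2.symm (e3 z)))
      = Set.indicator {z : ℝ × (ℝ × ℝ) | z.1^2 + z.2.1^2 + z.2.2^2 ≤ R^2}
          (fun z => (tobfG R (Real.sqrt (z.1^2 + z.2.1^2 + z.2.2^2)) : ℂ)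
            * Complex.exp (-(Complex.I * ((k * z.1 : ℝ) : ℂ)))) z := by
    rintro ⟨t, a, b⟩
    have hx0 : (e1.symm (e2.symm (e3 (t, a, b)))) 0 = t := rfl
    have hsum : ∑ i : Fin 3, ((e1.symm (e2.symm (e3 (t, a, b)))) i)^2 = t^2 + a^2 + b^2 := by
      rw [Fin.sum_univ_three]
      rfl
    have hnorm : ‖e1.symm (e2.symm (e3 (t, a, b)))‖ = Real.sqrt (t^2 + a^2 + b^2) := by
      rw [EuclideanSpace.norm_eq]
      congr 1
      rw [← hsum]
      congr 1
      ext i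
      rw [Real.norm_eq_abs, sq_abs]
    have hmem : e1.symm (e2.symm (e3 (t, a, b))) ∈ Metric.closedBall (0:EuclideanSpace ℝ (Fin 3)) R
        ↔ t^2 + a^2 + b^2 ≤ R^2 := by
      rw [Metric.mem_closedBall, dist_zero_right, hnorm]
      constructor
      · intro h
        nlinarith [Real.sq_sqrt (show (0:ℝ) ≤ t^2+a^2+b^2 by positivity),
          Real.sqrt_nonneg (t^2+a^2+b^2)]
      · intro h
        rw [show R = Real.sqrt (R^2) from (Real.sqrt_sq hR.le).symm]
        exact Real.sqrt_le_sqrt h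
    by_cases hc : t^2 + a^2 + b^2 ≤ R^2
    · rw [hFF, Set.indicator_of_mem (hmem.2 hc),
        Set.indicator_of_mem (show (t,(a,b)) ∈ {z : ℝ × (ℝ × ℝ) | z.1^2 + z.2.1^2 + z.2.2^2 ≤ R^2} from hc), hf]
      simp only [hnorm, hx0]
    · rw [hFF, Set.indicator_of_notMem (fun h => hc (hmem.1 h)),
        Set.indicator_of_notMem (show (t,(a,b)) ∉ {z : ℝ × (ℝ × ℝ) | z.1^2 + z.2.1^2 + z.2.2^2 ≤ R^2} from hc)]
  rw [step1]
  simp_rw [key]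
  set D : Set (ℝ × (ℝ × ℝ)) := {z | z.1^2 + z.2.1^2 + z.2.2^2 ≤ R^2} with hD
  set h : ℝ × (ℝ × ℝ) → ℂ := fun z => (tobfG R (Real.sqrt (z.1^2 + z.2.1^2 + z.2.2^2)) : ℂ)
    * Complex.exp (-(Complex.I * ((k * z.1 : ℝ) : ℂ))) with hh
  have hDclosed : IsClosed D := isClosed_le (by fun_prop) continuous_const
  have hDsub : D ⊆ Metric.closedBall 0 R := by
    intro z hz
    have hz' : z.1^2 + z.2.1^2 + z.2.2^2 ≤ R^2 := hz
    rw [Metric.mem_closedBall, dist_zero_right, Prod.norm_def, Prod.norm_def]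
    have h1 : ‖z.1‖ ≤ R := by
      rw [Real.norm_eq_abs]
      nlinarith [abs_nonneg z.1, sq_abs z.1, sq_nonneg z.2.1, sq_nonneg z.2.2]
    have h2 : ‖z.2.1‖ ≤ R := by
      rw [Real.norm_eq_abs]
      nlinarith [abs_nonneg z.2.1, sq_abs z.2.1, sq_nonneg z.1, sq_nonneg z.2.2]
    have h3 : ‖z.2.2‖ ≤ R := by
      rw [Real.norm_eq_abs]
      nlinarith [abs_nonneg z.2.2, sq_abs z.2.2, sq_nonneg z.1, sq_nonneg z.2.1]
    exact max_le h1 (max_le h2 h3)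
  have hK : IsCompact D := (isCompact_closedBall (0 : ℝ × (ℝ × ℝ)) R).of_isClosed_subset hDclosed hDsub
  have hcont : Continuous h := by
    apply Continuous.mul
    · exact Complex.continuous_ofReal.comp ((tobfG_cont R).comp (Real.continuous_sqrt.comp (by fun_prop)))
    · exact Complex.continuous_exp.comp (by fun_prop)
  have hint : Integrable (Set.indicator D h) volume :=
    (hcont.continuousOn.integrableOn_compact hK).integrable_indicator hDclosed.measurableSet
  rw [Measure.volume_eq_prod] at hint ⊢
  rw [integral_prod _ hint]
  have hswap : ∀ (t : ℝ) (q : ℝ × ℝ), Set.indicator D h (t, q)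
      = ((Set.indicator {q : ℝ × ℝ | t^2 + q.1^2 + q.2^2 ≤ R^2}
          (fun q => tobfG R (Real.sqrt (t^2 + q.1^2 + q.2^2))) q : ℝ) : ℂ)
        * Complex.exp (-(Complex.I * ((k * t : ℝ) : ℂ))) := by
    intro t q
    by_cases hc : t^2 + q.1^2 + q.2^2 ≤ R^2
    · rw [Set.indicator_of_mem (show (t, q) ∈ D from hc),
        Set.indicator_of_mem (show q ∈ {q : ℝ × ℝ | t^2 + q.1^2 + q.2^2 ≤ R^2} from hc), hh]
    · rw [Set.indicator_of_notMem (show (t, q) ∉ D from hc),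
        Set.indicator_of_notMem (show q ∉ {q : ℝ × ℝ | t^2 + q.1^2 + q.2^2 ≤ R^2} from hc)]
      simp
  have hinner : ∀ t : ℝ, t ≠ 0 → (∫ q : ℝ × ℝ, Set.indicator D h (t, q))
      = ((Set.indicator (Set.Icc (-R) R) (fun t => Real.pi * tobfQ R t) t : ℝ) : ℂ)
        * Complex.exp (-(Complex.I * ((k * t : ℝ) : ℂ))) := by
    intro t ht
    simp_rw [hswap t]
    rw [integral_mul_const]
    congr 1
    rw [← lemA R hR t ht]
    exact integral_ofReal
  have h0 : ∀ᵐ t : ℝ, t ≠ 0 := by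
    rw [ae_iff]
    have : {t : ℝ | ¬ t ≠ 0} = {0} := by ext t; simp
    rw [this]
    exact Real.volume_singleton
  rw [integral_congr_ae (h0.mono (fun t ht => hinner t ht))]
  have hpull : (fun t : ℝ => ((Set.indicator (Set.Icc (-R) R) (fun t => Real.pi * tobfQ R t) t : ℝ) : ℂ)
        * Complex.exp (-(Complex.I * ((k * t : ℝ) : ℂ))))
      = Set.indicator (Set.Icc (-R) R) (fun t : ℝ => ((Real.pi * tobfQ R t : ℝ) : ℂ)
        * Complex.exp (-(Complex.I * ((k * t : ℝ) : ℂ)))) := by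
    ext t
    by_cases hc : t ∈ Set.Icc (-R) R
    · rw [Set.indicator_of_mem hc, Set.indicator_of_mem hc]
    · rw [Set.indicator_of_notMem hc, Set.indicator_of_notMem hc]
      simp
  rw [hpull, integral_indicator measurableSet_Icc, integral_Icc_eq_integral_Ioc,
    ← intervalIntegral.integral_of_le (by linarith : -R ≤ R)]
  rw [← intervalIntegral.integral_const_mul]
  congr 1
  ext t
  push_cast
  ring

/-- Fourier transform of the optimally gauged truncated biharmonic kernel
`|r| − R/2 − |r|²/(2R)` on the ball of radius `R`:
`∫_{|r|≤R} (|r| − R/2 − |r|²/(2R)) e^{-iκ·r} dr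
  = −(8π/k⁴)(1 + ½ cos(Rk) − (3/2) sin(Rk)/(Rk))` for `κ ≠ 0` (with `k = |κ|`),
and the value at `κ = 0` is `−πR⁴/15`. -/
theorem truncated_optimal_biharmonic_fourier (R : ℝ) (hR : 0 < R) :
    (∀ κ : EuclideanSpace ℝ (Fin 3), κ ≠ 0 →
      (∫ r in Metric.closedBall (0 : EuclideanSpace ℝ (Fin 3)) R,
          ((‖r‖ - R / 2 - ‖r‖ ^ 2 / (2 * R) : ℝ) : ℂ) *
            Complex.exp (-(Complex.I * ((inner ℝ κ r : ℝ) : ℂ))))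
      = ((-(8 * Real.pi / ‖κ‖ ^ 4) *
          (1 + (1/2) * Real.cos (R * ‖κ‖)
             - (3/2) * Real.sin (R * ‖κ‖) / (R * ‖κ‖)) : ℝ) : ℂ))
    ∧
    (∫ r in Metric.closedBall (0 : EuclideanSpace ℝ (Fin 3)) R,
        (‖r‖ - R / 2 - ‖r‖ ^ 2 / (2 * R)))
      = -(Real.pi * R ^ 4) / 15 := by
  constructor
  · intro κ hκ
    set k := ‖κ‖ with hkdef
    have hk : k ≠ 0 := norm_ne_zero_iff.2 hκ
    have hON : Orthonormal ℝ (Set.restrict {(0 : Fin 3)} (fun _ : Fin 3 => k⁻¹ • κ)) := by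
      constructor
      · rintro ⟨i, hi⟩
        show ‖k⁻¹ • κ‖ = 1
        rw [norm_smul, norm_inv, norm_norm]
        exact inv_mul_cancel₀ hk
      · rintro ⟨i, hi⟩ ⟨j, hj⟩ hij
        exfalso
        apply hij
        apply Subtype.ext
        simp only [Set.mem_singleton_iff] at hi hj
        exact hi.trans hj.symm
    obtain ⟨b, hb⟩ := hON.exists_orthonormalBasis_extension_of_card_eq (by simp)
    have hb0 : b 0 = k⁻¹ • κ := hb 0 rfl
    set L := b.repr with hL
    have hmp : MeasurePreserving (⇑L.symm) volume volume := b.measurePreserving_repr_symm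
    have hpre : (⇑L.symm) ⁻¹' (Metric.closedBall (0 : EuclideanSpace ℝ (Fin 3)) R)
        = Metric.closedBall 0 R := by
      ext u
      simp [mem_closedBall_zero_iff, L.symm.norm_map]
    have hinner : ∀ u : EuclideanSpace ℝ (Fin 3), (inner ℝ κ (L.symm u) : ℝ) = k * u 0 := by
      intro u
      have hκeq : κ = k • b 0 := by
        rw [hb0, smul_smul, mul_inv_cancel₀ hk, one_smul]
      calc (inner ℝ κ (L.symm u) : ℝ) = (inner ℝ (L κ) (L (L.symm u)) : ℝ) :=
            (L.inner_map_map κ (L.symm u)).symm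
        _ = (inner ℝ (L κ) u : ℝ) := by rw [L.apply_symm_apply]
        _ = k * u 0 := by
            rw [hκeq, LinearIsometryEquiv.map_smul, OrthonormalBasis.repr_self, real_inner_smul_left,
              EuclideanSpace.inner_single_left]
            simp
    have hrot := hmp.setIntegral_preimage_emb (L.symm.toHomeomorph.measurableEmbedding)
      (fun r => ((‖r‖ - R / 2 - ‖r‖ ^ 2 / (2 * R) : ℝ) : ℂ) *
        Complex.exp (-(Complex.I * ((inner ℝ κ r : ℝ) : ℂ))))
      (Metric.closedBall (0 : EuclideanSpace ℝ (Fin 3)) R)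
    rw [hpre] at hrot
    rw [← hrot]
    have hcg : ∀ u ∈ Metric.closedBall (0 : EuclideanSpace ℝ (Fin 3)) R,
        ((‖L.symm u‖ - R / 2 - ‖L.symm u‖ ^ 2 / (2 * R) : ℝ) : ℂ) *
          Complex.exp (-(Complex.I * ((inner ℝ κ (L.symm u) : ℝ) : ℂ)))
        = (tobfG R ‖u‖ : ℂ) * Complex.exp (-(Complex.I * ((k * u 0 : ℝ) : ℂ))) := by
      intro u _
      rw [hinner u, L.symm.norm_map]
      rfl
    rw [setIntegral_congr_fun measurableSet_closedBall hcg]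
    rw [tobf_core R hR k, oneD R k hR hk]
    push_cast
    ring
  · have hcore := tobf_core R hR 0
    simp only [zero_mul, Complex.ofReal_zero, mul_zero, neg_zero, Complex.exp_zero,
      mul_one] at hcore
    have h2 : ∫ t in (-R)..R, (tobfQ R t : ℂ) = ((-R^4/15 : ℝ) : ℂ) := by
      rw [intervalIntegral.integral_ofReal, oneD0 R hR]
    rw [h2] at hcore
    have h3 : (∫ r in Metric.closedBall (0 : EuclideanSpace ℝ (Fin 3)) R, ((tobfG R ‖r‖ : ℝ) : ℂ))
        = (((∫ r in Metric.closedBall (0 : EuclideanSpace ℝ (Fin 3)) R, tobfG R ‖r‖) : ℝ) : ℂ) :=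
      integral_ofReal
    rw [h3] at hcore
    have h4 : (∫ r in Metric.closedBall (0 : EuclideanSpace ℝ (Fin 3)) R, tobfG R ‖r‖)
        = π * (-R^4/15) := by
      rw [show ((π : ℝ) : ℂ) * ((-R^4/15 : ℝ) : ℂ) = ((π * (-R^4/15) : ℝ) : ℂ) by push_cast; ring] at hcore
      exact_mod_cast hcore
    calc ∫ r in Metric.closedBall (0 : EuclideanSpace ℝ (Fin 3)) R,
          (‖r‖ - R / 2 - ‖r‖ ^ 2 / (2 * R))
        = ∫ r in Metric.closedBall (0 : EuclideanSpace ℝ (Fin 3)) R, tobfG R ‖r‖ := rfl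
      _ = π * (-R^4/15) := h4
      _ = -(Real.pi * R ^ 4) / 15 := by ring
end

section
/- Let α > 0, ξ > 0 and r ∈ ℝ. Then −(1/2π) ∫_ℝ (8π/(α² + κ²)²) e^{-(α² + κ²)/(4ξ²)} (1 + (α² + κ²)/(4ξ²)) e^{i κ r} dκ = −(π/α²) Λ(α, r), where Λ(α, r) = λ(α, r) + (1/α) β⁺(α, r) − r β⁻(α, r), with λ(α, r) = (2/(√π ξ)) e^{-α²/(4ξ²)} e^{-ξ² r²}, β⁺(α, r) = e^{α r} erfc(α/(2ξ) + ξ r) + e^{-α r} erfc(α/(2ξ) − ξ r), and β⁻(α, r) = e^{α r} erfc(α/(2ξ) + ξ r) − e^{-α r} erfc(α/(2ξ) − ξ r). -/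
open MeasureTheory

section Auxiliary

open Real Filter Topology

lemma erf_hasDerivAt (x : ℝ) :
    HasDerivAt erf (2 / Real.sqrt Real.pi * Real.exp (-(x ^ 2))) x := by
  have hc : Continuous fun s : ℝ => Real.exp (-(s ^ 2)) := by continuity
  have h := intervalIntegral.integral_hasDerivAt_right
    (hc.intervalIntegrable 0 x)
    hc.stronglyMeasurable.stronglyMeasurableAtFilter
    hc.continuousAt
  exact h.const_mul (2 / Real.sqrt Real.pi)

lemma erf_tendsto_one : Tendsto erf atTop (𝓝 1) := by
  have hint : IntegrableOn (fun s : ℝ => Real.exp (-(s ^ 2))) (Set.Ioi 0) := by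
    have := (integrable_exp_neg_mul_sq (one_pos)).integrableOn (s := Set.Ioi (0:ℝ))
    simpa using this
  have h := MeasureTheory.intervalIntegral_tendsto_integral_Ioi 0 hint tendsto_id
  have hval : (∫ s in Set.Ioi (0:ℝ), Real.exp (-(s ^ 2))) = Real.sqrt Real.pi / 2 := by
    have := integral_gaussian_Ioi 1
    simpa using this
  have h2 := h.const_mul (2 / Real.sqrt Real.pi)
  rw [hval] at h2
  have hπ : Real.sqrt Real.pi ≠ 0 := by positivity
  have h3 : Tendsto erf atTop (𝓝 (2 / Real.sqrt Real.pi * (Real.sqrt Real.pi / 2))) := h2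
  convert h3 using 2
  field_simp

lemma tendsto_mul_exp_neg (c : ℝ) (hc : 0 < c) :
    Tendsto (fun t : ℝ => t * Real.exp (-(c * t))) atTop (𝓝 0) := by
  have h1 := tendsto_pow_mul_exp_neg_atTop_nhds_zero 1
  have h2 : Tendsto (fun t : ℝ => c * t) atTop atTop :=
    Tendsto.const_mul_atTop hc tendsto_id
  have h3 := (h1.comp h2).const_mul (1 / c)
  rw [mul_zero] at h3
  refine h3.congr fun t => ?_
  simp only [Function.comp_apply, pow_one]
  field_simp

/-- `∫_{t>a} t e^{-ct} dt = (1+ca) e^{-ca} / c²`, plus integrability. -/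
lemma t_exp_integral {c a : ℝ} (hc : 0 < c) (ha : 0 ≤ a) :
    IntegrableOn (fun t : ℝ => t * Real.exp (-(c * t))) (Set.Ioi a) ∧
    (∫ t in Set.Ioi a, t * Real.exp (-(c * t)))
      = (1 + c * a) * Real.exp (-(c * a)) / c ^ 2 := by
  set g : ℝ → ℝ := fun t => -((t / c + 1 / c ^ 2) * Real.exp (-(c * t))) with hg
  have hderiv : ∀ t : ℝ, HasDerivAt g (t * Real.exp (-(c * t))) t := by
    intro t
    have he : HasDerivAt (fun t : ℝ => Real.exp (-(c * t)))
        (Real.exp (-(c * t)) * (-c)) t := by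
      have : HasDerivAt (fun t : ℝ => -(c * t)) (-c) t := by
        have h := ((hasDerivAt_id t).const_mul c).neg; rw [mul_one] at h; exact h
      exact this.exp
    have hl : HasDerivAt (fun t : ℝ => t / c + 1 / c ^ 2) (1 / c) t := by
      have := ((hasDerivAt_id t).div_const c).add_const (1 / c ^ 2)
      simpa [one_div] using this
    have := (hl.mul he).neg
    refine this.congr_deriv (Eq.symm ?_)
    field_simp
    ring
  have htend : Tendsto g atTop (𝓝 0) := by
    have h1 := (tendsto_mul_exp_neg c hc).const_mul (1 / c)
    have h2 : Tendsto (fun t : ℝ => Real.exp (-(c * t))) atTop (𝓝 0) := by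
      exact (Real.tendsto_exp_neg_atTop_nhds_zero.comp
        (Tendsto.const_mul_atTop hc tendsto_id)).congr fun t => by
          simp [Function.comp]
    have h3 := h2.const_mul (1 / c ^ 2)
    have := ((h1.add h3).neg)
    simp only [mul_zero, add_zero, neg_zero] at this
    refine this.congr fun t => ?_
    simp only [hg]
    ring
  have hpos : ∀ t ∈ Set.Ioi a, 0 ≤ t * Real.exp (-(c * t)) := by
    intro t ht
    have : 0 < t := lt_of_le_of_lt ha ht
    positivity
  constructor
  · exact integrableOn_Ioi_deriv_of_nonneg' (fun t _ => hderiv t) hpos htend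
  · have := integral_Ioi_of_hasDerivAt_of_nonneg' (fun t _ => hderiv t) hpos htend
    rw [this, hg]
    field_simp
    ring

lemma sqrt_tendsto_atTop : Tendsto Real.sqrt atTop atTop := by
  apply tendsto_atTop_atTop.mpr
  intro b
  refine ⟨max (b ^ 2) 0, fun x hx => ?_⟩
  have hxb : b ^ 2 ≤ x := le_trans (le_max_left _ _) hx
  calc b ≤ |b| := le_abs_self b
  _ = Real.sqrt (b ^ 2) := (Real.sqrt_sq_eq_abs b).symm
  _ ≤ Real.sqrt x := Real.sqrt_le_sqrt hxb

lemma sqrtE_tendsto (α r : ℝ) (hα : 0 < α) :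
    Tendsto (fun t : ℝ => Real.sqrt t * Real.exp (-(α ^ 2 * t) - r ^ 2 * (4 * t)⁻¹))
      atTop (𝓝 0) := by
  apply squeeze_zero' (g := fun t : ℝ => t * Real.exp (-(α ^ 2 * t)))
  · filter_upwards [eventually_ge_atTop (1 : ℝ)] with t ht
    positivity
  · filter_upwards [eventually_ge_atTop (1 : ℝ)] with t ht
    have ht0 : (0:ℝ) < t := by linarith
    have h1 : Real.sqrt t ≤ t :=
      calc Real.sqrt t ≤ Real.sqrt (t ^ 2) := Real.sqrt_le_sqrt (by nlinarith)
      _ = t := Real.sqrt_sq ht0.le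
    have h2 : Real.exp (-(α ^ 2 * t) - r ^ 2 * (4 * t)⁻¹) ≤ Real.exp (-(α ^ 2 * t)) := by
      apply Real.exp_le_exp.mpr
      have : 0 ≤ r ^ 2 * (4 * t)⁻¹ := by positivity
      linarith
    exact mul_le_mul h1 h2 (Real.exp_pos _).le (by linarith)
  · exact tendsto_mul_exp_neg (α ^ 2) (by positivity)

lemma J_integral (α r a : ℝ) (hα : 0 < α) (ha : 0 < a) :
    IntegrableOn (fun t : ℝ => Real.sqrt t * Real.exp (-(α ^ 2 * t) - r ^ 2 * (4 * t)⁻¹))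
      (Set.Ioi a) ∧
    (∫ t in Set.Ioi a, Real.sqrt t * Real.exp (-(α ^ 2 * t) - r ^ 2 * (4 * t)⁻¹))
      = (Real.sqrt Real.pi / (4 * α ^ 3) * (1 + α * r) * Real.exp (-(α * r))
          + Real.sqrt Real.pi / (4 * α ^ 3) * (1 - α * r) * Real.exp (α * r))
        - (-((α ^ 2)⁻¹ * Real.sqrt a * Real.exp (-(α ^ 2 * a) - r ^ 2 * (4 * a)⁻¹))
            + Real.sqrt Real.pi / (4 * α ^ 3) * (1 + α * r) * Real.exp (-(α * r)) *
                erf (α * Real.sqrt a - r / 2 * (Real.sqrt a)⁻¹)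
            + Real.sqrt Real.pi / (4 * α ^ 3) * (1 - α * r) * Real.exp (α * r) *
                erf (α * Real.sqrt a + r / 2 * (Real.sqrt a)⁻¹)) := by
  set P : ℝ := Real.sqrt Real.pi / (4 * α ^ 3) * (1 + α * r) * Real.exp (-(α * r)) with hP
  set Q : ℝ := Real.sqrt Real.pi / (4 * α ^ 3) * (1 - α * r) * Real.exp (α * r) with hQ
  set H : ℝ → ℝ := fun t =>
    -((α ^ 2)⁻¹ * Real.sqrt t * Real.exp (-(α ^ 2 * t) - r ^ 2 * (4 * t)⁻¹))
      + P * erf (α * Real.sqrt t - r / 2 * (Real.sqrt t)⁻¹)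
      + Q * erf (α * Real.sqrt t + r / 2 * (Real.sqrt t)⁻¹) with hH
  have hπ : (0:ℝ) < Real.sqrt Real.pi := Real.sqrt_pos.mpr Real.pi_pos
  have hderiv : ∀ t ∈ Set.Ici a, HasDerivAt H
      (Real.sqrt t * Real.exp (-(α ^ 2 * t) - r ^ 2 * (4 * t)⁻¹)) t := by
    intro t hta
    have ht : (0:ℝ) < t := lt_of_lt_of_le ha hta
    have hst : (0:ℝ) < Real.sqrt t := Real.sqrt_pos.mpr ht
    have h_sqrt : HasDerivAt Real.sqrt (1 / (2 * Real.sqrt t)) t := Real.hasDerivAt_sqrt ht.ne'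
    have c1 : HasDerivAt (fun t : ℝ => -(α ^ 2 * t)) (-(α ^ 2)) t := by
      have h := ((hasDerivAt_id t).const_mul (α ^ 2)).neg; rw [mul_one] at h; exact h
    have c2 : HasDerivAt (fun t : ℝ => (4 * t)⁻¹) (-(4 * 1) / (4 * t) ^ 2) t := by
      have h4 : HasDerivAt (fun t : ℝ => 4 * t) (4 * 1) t := (hasDerivAt_id t).const_mul 4
      exact h4.inv (by positivity)
    have h_arg : HasDerivAt (fun t : ℝ => -(α ^ 2 * t) - r ^ 2 * (4 * t)⁻¹)
        (-(α ^ 2) - r ^ 2 * (-(4 * 1) / (4 * t) ^ 2)) t := c1.sub (c2.const_mul (r ^ 2))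
    have h_exp := h_arg.exp
    have h_t1 := ((h_sqrt.const_mul ((α ^ 2)⁻¹)).mul h_exp).neg
    have h_inv : HasDerivAt (fun t : ℝ => (Real.sqrt t)⁻¹)
        (-(1 / (2 * Real.sqrt t)) / Real.sqrt t ^ 2) t := h_sqrt.inv hst.ne'
    have h_g1 : HasDerivAt (fun t : ℝ => α * Real.sqrt t - r / 2 * (Real.sqrt t)⁻¹)
        (α * (1 / (2 * Real.sqrt t)) - r / 2 * (-(1 / (2 * Real.sqrt t)) / Real.sqrt t ^ 2)) t :=
      (h_sqrt.const_mul α).sub (h_inv.const_mul (r / 2))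
    have h_g2 : HasDerivAt (fun t : ℝ => α * Real.sqrt t + r / 2 * (Real.sqrt t)⁻¹)
        (α * (1 / (2 * Real.sqrt t)) + r / 2 * (-(1 / (2 * Real.sqrt t)) / Real.sqrt t ^ 2)) t :=
      (h_sqrt.const_mul α).add (h_inv.const_mul (r / 2))
    have h_e1 := ((erf_hasDerivAt _).comp t h_g1).const_mul P
    have h_e2 := ((erf_hasDerivAt _).comp t h_g2).const_mul Q
    have h_H := (h_t1.add h_e1).add h_e2
    have hts : t = Real.sqrt t ^ 2 := (Real.sq_sqrt ht.le).symm
    have hE1 : Real.exp (-((α * Real.sqrt t - r / 2 * (Real.sqrt t)⁻¹) ^ 2))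
        = Real.exp (α * r) * Real.exp (-(α ^ 2 * t) - r ^ 2 * (4 * t)⁻¹) := by
      rw [← Real.exp_add]
      congr 1
      set s := Real.sqrt t with hsdef
      rw [hts]
      field_simp
      ring
    have hE2 : Real.exp (-((α * Real.sqrt t + r / 2 * (Real.sqrt t)⁻¹) ^ 2))
        = Real.exp (-(α * r)) * Real.exp (-(α ^ 2 * t) - r ^ 2 * (4 * t)⁻¹) := by
      rw [← Real.exp_add]
      congr 1
      set s := Real.sqrt t with hsdef
      rw [hts]
      field_simp
      ring
    refine h_H.congr_deriv (Eq.symm ?_)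
    rw [hE1, hE2, hP, hQ]
    rw [Real.exp_neg]
    set s := Real.sqrt t with hsdef
    set E := Real.exp (-(α ^ 2 * t) - r ^ 2 * (4 * t)⁻¹) with hEdef
    have hE : E = Real.exp (-(α ^ 2 * s ^ 2) - r ^ 2 * (4 * s ^ 2)⁻¹) := by rw [hEdef, ← hts]
    rw [hts, hE]
    have hexp : (0:ℝ) < Real.exp (α * r) := Real.exp_pos _
    field_simp
    ring
  have hpos : ∀ t ∈ Set.Ioi a, 0 ≤ Real.sqrt t * Real.exp (-(α ^ 2 * t) - r ^ 2 * (4 * t)⁻¹) := by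
    intro t _; positivity
  have htend : Tendsto H atTop (𝓝 (0 + P * 1 + Q * 1)) := by
    have h1 : Tendsto (fun t : ℝ =>
        -((α ^ 2)⁻¹ * Real.sqrt t * Real.exp (-(α ^ 2 * t) - r ^ 2 * (4 * t)⁻¹)))
        atTop (𝓝 0) := by
      have := ((sqrtE_tendsto α r hα).const_mul ((α ^ 2)⁻¹)).neg
      simp only [mul_zero, neg_zero] at this
      exact this.congr fun t => by ring
    have hinv0 : Tendsto (fun t : ℝ => r / 2 * (Real.sqrt t)⁻¹) atTop (𝓝 0) := by
      have := (tendsto_inv_atTop_zero.comp sqrt_tendsto_atTop).const_mul (r / 2)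
      simpa using this
    have harg1 : Tendsto (fun t : ℝ => α * Real.sqrt t - r / 2 * (Real.sqrt t)⁻¹) atTop atTop := by
      have hmul : Tendsto (fun t : ℝ => α * Real.sqrt t) atTop atTop :=
        Tendsto.const_mul_atTop hα sqrt_tendsto_atTop
      have hev : ∀ᶠ t : ℝ in atTop, (-1:ℝ) ≤ -(r / 2 * (Real.sqrt t)⁻¹) :=
        hinv0.neg.eventually (eventually_ge_nhds (by norm_num : (-1:ℝ) < -0))
      have := tendsto_atTop_add_right_of_le' atTop (-1 : ℝ) hmul hev
      exact this.congr fun t => by ring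
    have harg2 : Tendsto (fun t : ℝ => α * Real.sqrt t + r / 2 * (Real.sqrt t)⁻¹) atTop atTop := by
      have hmul : Tendsto (fun t : ℝ => α * Real.sqrt t) atTop atTop :=
        Tendsto.const_mul_atTop hα sqrt_tendsto_atTop
      have hev : ∀ᶠ t : ℝ in atTop, (-1:ℝ) ≤ r / 2 * (Real.sqrt t)⁻¹ :=
        hinv0.eventually (eventually_ge_nhds (by norm_num : (-1:ℝ) < 0))
      exact tendsto_atTop_add_right_of_le' atTop (-1 : ℝ) hmul hev
    exact (h1.add ((erf_tendsto_one.comp harg1).const_mul P)).add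
      ((erf_tendsto_one.comp harg2).const_mul Q)
  constructor
  · exact integrableOn_Ioi_deriv_of_nonneg' hderiv hpos htend
  · have := integral_Ioi_of_hasDerivAt_of_nonneg' hderiv hpos htend
    rw [this, hH]
    ring

lemma gauss_ft (t r : ℝ) (ht : 0 < t) :
    (∫ κ : ℝ, ((Real.exp (-(t * κ ^ 2)) : ℝ) : ℂ) * Complex.exp (Complex.I * κ * r))
      = ((Real.sqrt (Real.pi / t) * Real.exp (-(r ^ 2 / (4 * t))) : ℝ) : ℂ) := by
  have hb : (0:ℝ) < ((t : ℂ)).re := by simpa using ht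
  have h := fourierIntegral_gaussian (b := (t : ℂ)) hb (r : ℂ)
  have hL : (∫ κ : ℝ, ((Real.exp (-(t * κ ^ 2)) : ℝ) : ℂ) * Complex.exp (Complex.I * κ * r))
      = ∫ x : ℝ, Complex.exp (Complex.I * r * x) * Complex.exp (-(t:ℂ) * x ^ 2) := by
    congr 1
    funext κ
    rw [Complex.ofReal_exp, mul_comm]
    congr 1
    · congr 1; ring
    · congr 1; push_cast; ring
  rw [hL, h]
  have h1 : ((Real.pi : ℂ) / (t : ℂ)) ^ (1 / 2 : ℂ) = ((Real.sqrt (Real.pi / t) : ℝ) : ℂ) := by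
    rw [Real.sqrt_eq_rpow]
    rw [Complex.ofReal_cpow (by positivity) (1/2 : ℝ)]
    push_cast
    ring_nf
  have h2 : Complex.exp (-(r:ℂ) ^ 2 / (4 * (t:ℂ))) = ((Real.exp (-(r ^ 2 / (4 * t))) : ℝ) : ℂ) := by
    rw [Complex.ofReal_exp]
    congr 1
    push_cast
    ring
  rw [h1, h2, ← Complex.ofReal_mul]

lemma norm_cexp_I (κ r : ℝ) : ‖Complex.exp (Complex.I * κ * r)‖ = 1 := by
  rw [Complex.norm_exp]
  simp [Complex.mul_re]

lemma fubini_step (α r a : ℝ) (hα : 0 < α) (ha : 0 < a) :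
    (∫ κ : ℝ, (((∫ t in Set.Ioi a, t * Real.exp (-((α ^ 2 + κ ^ 2) * t))) : ℝ) : ℂ)
        * Complex.exp (Complex.I * κ * r))
      = ∫ t in Set.Ioi a, ((t * Real.exp (-(α ^ 2 * t)) : ℝ) : ℂ)
          * ∫ κ : ℝ, ((Real.exp (-(t * κ ^ 2)) : ℝ) : ℂ) * Complex.exp (Complex.I * κ * r) := by
  set F : ℝ → ℝ → ℂ := fun κ t =>
    ((t * Real.exp (-((α ^ 2 + κ ^ 2) * t)) : ℝ) : ℂ) * Complex.exp (Complex.I * κ * r) with hF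
  have hcpos : ∀ κ : ℝ, (0:ℝ) < α ^ 2 + κ ^ 2 := fun κ => by positivity
  have hFint : Integrable (Function.uncurry F)
      (volume.prod (volume.restrict (Set.Ioi a))) := by
    have hcont : Continuous (Function.uncurry F) := by
      apply Continuous.mul
      · apply Complex.continuous_ofReal.comp
        fun_prop
      · apply Complex.continuous_exp.comp
        have : Continuous fun p : ℝ × ℝ => (p.1 : ℂ) := Complex.continuous_ofReal.comp continuous_fst
        fun_prop
    rw [MeasureTheory.integrable_prod_iff hcont.aestronglyMeasurable]
    constructor
    · refine Filter.Eventually.of_forall fun κ => ?_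
      have := ((t_exp_integral (hcpos κ) ha.le).1.ofReal (𝕜 := ℂ)).mul_const
        (Complex.exp (Complex.I * κ * r))
      exact this
    · have heq : (fun κ : ℝ => ∫ t in Set.Ioi a, ‖F κ t‖)
          = fun κ : ℝ => (1 + (α ^ 2 + κ ^ 2) * a) * Real.exp (-((α ^ 2 + κ ^ 2) * a))
              / (α ^ 2 + κ ^ 2) ^ 2 := by
        funext κ
        have h1 : ∀ t ∈ Set.Ioi a, ‖F κ t‖
            = t * Real.exp (-((α ^ 2 + κ ^ 2) * t)) := by
          intro t ht
          have ht0 : 0 < t := lt_trans ha ht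
          simp only [hF]
          simp only [norm_mul, norm_cexp_I, mul_one, Complex.norm_real, Real.norm_eq_abs,
            abs_mul, Real.abs_exp]
          rw [abs_of_nonneg ht0.le]
        rw [setIntegral_congr_fun measurableSet_Ioi h1, (t_exp_integral (hcpos κ) ha.le).2]
      simp only [Function.uncurry_apply_pair]
      rw [heq]
      set C : ℝ := 1 / α ^ 4 + a / α ^ 2 with hC
      apply Integrable.mono' ((integrable_exp_neg_mul_sq ha).const_mul C)
      · apply Continuous.aestronglyMeasurable
        apply Continuous.div (by fun_prop) (by fun_prop)
        intro κ; positivity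
      · refine Filter.Eventually.of_forall fun κ => ?_
        set c : ℝ := α ^ 2 + κ ^ 2 with hc
        have hc0 : (0:ℝ) < c := hcpos κ
        have hcge : α ^ 2 ≤ c := by nlinarith [sq_nonneg κ]
        have hnn : (0:ℝ) ≤ (1 + c * a) * Real.exp (-(c * a)) / c ^ 2 := by positivity
        rw [Real.norm_eq_abs, abs_of_nonneg hnn]
        have hexp : Real.exp (-(c * a)) ≤ Real.exp (-a * κ ^ 2) :=
          Real.exp_le_exp.mpr (by nlinarith [sq_nonneg α])
        have hstep1 : (1 + c * a) * Real.exp (-(c * a)) / c ^ 2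
            ≤ (1 + c * a) * Real.exp (-a * κ ^ 2) / c ^ 2 := by
          apply div_le_div_of_nonneg_right ?_ (by positivity)
          exact mul_le_mul_of_nonneg_left hexp (by positivity)
        have hkey : 1 + c * a ≤ C * c ^ 2 := by
          have h4 : α ^ 4 ≤ c ^ 2 := by nlinarith
          have h5 : c * α ^ 2 ≤ c ^ 2 := by nlinarith
          have hC2 : C * c ^ 2 = c ^ 2 / α ^ 4 + a * (c ^ 2 / α ^ 2) := by rw [hC]; ring
          rw [hC2]
          have e1 : (1:ℝ) ≤ c ^ 2 / α ^ 4 := (one_le_div (by positivity)).mpr h4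
          have e2 : c ≤ c ^ 2 / α ^ 2 := (le_div_iff₀ (by positivity)).mpr h5
          nlinarith
        have hstep2 : (1 + c * a) * Real.exp (-a * κ ^ 2) / c ^ 2
            ≤ C * Real.exp (-a * κ ^ 2) := by
          rw [div_le_iff₀ (by positivity)]
          calc (1 + c * a) * Real.exp (-a * κ ^ 2) ≤ (C * c ^ 2) * Real.exp (-a * κ ^ 2) :=
                mul_le_mul_of_nonneg_right hkey (Real.exp_pos _).le
          _ = C * Real.exp (-a * κ ^ 2) * c ^ 2 := by ring
        exact le_trans hstep1 hstep2
  calc (∫ κ : ℝ, (((∫ t in Set.Ioi a, t * Real.exp (-((α ^ 2 + κ ^ 2) * t))) : ℝ) : ℂ)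
        * Complex.exp (Complex.I * κ * r))
      = ∫ κ : ℝ, ∫ t in Set.Ioi a, F κ t := by
        congr 1
        funext κ
        rw [hF, MeasureTheory.integral_mul_const]
        congr 1
        exact (integral_ofReal (𝕜 := ℂ)).symm
  _ = ∫ t in Set.Ioi a, ∫ κ : ℝ, F κ t := MeasureTheory.integral_integral_swap hFint
  _ = ∫ t in Set.Ioi a, ((t * Real.exp (-(α ^ 2 * t)) : ℝ) : ℂ)
          * ∫ κ : ℝ, ((Real.exp (-(t * κ ^ 2)) : ℝ) : ℂ) * Complex.exp (Complex.I * κ * r) := by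
        congr 1
        funext t
        simp only [hF]
        rw [← integral_const_mul]
        congr 1
        funext κ
        rw [← mul_assoc, ← Complex.ofReal_mul]
        congr 1
        rw [show -((α ^ 2 + κ ^ 2) * t) = -(α ^ 2 * t) + -(t * κ ^ 2) by ring, Real.exp_add,
          mul_assoc]

end Auxiliary

/-- One-dimensional inverse Fourier transform of the screened biharmonic kernel at
periodic wavenumber `α`:
`−(1/2π) ∫_ℝ (8π/(α²+κ²)²) e^{-(α²+κ²)/(4ξ²)} (1+(α²+κ²)/(4ξ²)) e^{iκr} dκ
  = −(π/α²) Λ(α,r)` where `Λ = λ + (1/α)β⁺ − r β⁻`,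
`λ = (2/(√π ξ)) e^{-α²/(4ξ²)} e^{-ξ²r²}`,
`β± = e^{αr} erfc(α/(2ξ)+ξr) ± e^{-αr} erfc(α/(2ξ)−ξr)`. -/
theorem screened_biharmonic_1d_inverse_fourier (α ξ r : ℝ) (hα : 0 < α) (hξ : 0 < ξ) :
    -(((1 / (2 * Real.pi) : ℝ) : ℂ) *
      (∫ κ : ℝ, ((8 * Real.pi / (α ^ 2 + κ ^ 2) ^ 2 *
          Real.exp (-((α ^ 2 + κ ^ 2) / (4 * ξ ^ 2))) *
          (1 + (α ^ 2 + κ ^ 2) / (4 * ξ ^ 2)) : ℝ) : ℂ) *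
        Complex.exp (Complex.I * (κ : ℂ) * (r : ℂ))))
    = ((-(Real.pi / α ^ 2) *
        ((2 / (Real.sqrt Real.pi * ξ)) * Real.exp (-(α ^ 2 / (4 * ξ ^ 2))) *
            Real.exp (-(ξ ^ 2 * r ^ 2))
          + (1 / α) *
            (Real.exp (α * r) * erfc (α / (2 * ξ) + ξ * r)
              + Real.exp (-(α * r)) * erfc (α / (2 * ξ) - ξ * r))
          - r *
            (Real.exp (α * r) * erfc (α / (2 * ξ) + ξ * r)
              - Real.exp (-(α * r)) * erfc (α / (2 * ξ) - ξ * r))) : ℝ) : ℂ) := by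
  have hπ0 : (0:ℝ) < Real.pi := Real.pi_pos
  have hsqpi : (0:ℝ) < Real.sqrt Real.pi := Real.sqrt_pos.mpr hπ0
  set a : ℝ := 1 / (4 * ξ ^ 2) with ha_def
  have ha : 0 < a := by rw [ha_def]; positivity
  -- Step 1: rewrite the integrand using the kernel decomposition
  have real_eq : ∀ κ : ℝ,
      (8 * Real.pi / (α ^ 2 + κ ^ 2) ^ 2 *
          Real.exp (-((α ^ 2 + κ ^ 2) / (4 * ξ ^ 2))) *
          (1 + (α ^ 2 + κ ^ 2) / (4 * ξ ^ 2)))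
        = 8 * Real.pi * ∫ t in Set.Ioi a, t * Real.exp (-((α ^ 2 + κ ^ 2) * t)) := by
    intro κ
    have hc : (0:ℝ) < α ^ 2 + κ ^ 2 := by positivity
    rw [(t_exp_integral hc ha.le).2]
    rw [show -((α ^ 2 + κ ^ 2) / (4 * ξ ^ 2)) = -((α ^ 2 + κ ^ 2) * a) by rw [ha_def]; ring]
    rw [ha_def]
    field_simp
  have hI : (∫ κ : ℝ, ((8 * Real.pi / (α ^ 2 + κ ^ 2) ^ 2 *
          Real.exp (-((α ^ 2 + κ ^ 2) / (4 * ξ ^ 2))) *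
          (1 + (α ^ 2 + κ ^ 2) / (4 * ξ ^ 2)) : ℝ) : ℂ) *
        Complex.exp (Complex.I * (κ : ℂ) * (r : ℂ)))
      = ((8 * Real.pi : ℝ) : ℂ) *
          ∫ κ : ℝ, (((∫ t in Set.Ioi a, t * Real.exp (-((α ^ 2 + κ ^ 2) * t))) : ℝ) : ℂ)
            * Complex.exp (Complex.I * κ * r) := by
    rw [← integral_const_mul]
    congr 1
    funext κ
    rw [real_eq κ, Complex.ofReal_mul]
    push_cast
    ring
  rw [hI, fubini_step α r a hα ha]
  -- Step 2: evaluate the inner Gaussian integral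
  have hInner : (∫ t in Set.Ioi a, ((t * Real.exp (-(α ^ 2 * t)) : ℝ) : ℂ)
          * ∫ κ : ℝ, ((Real.exp (-(t * κ ^ 2)) : ℝ) : ℂ) * Complex.exp (Complex.I * κ * r))
      = ((Real.sqrt Real.pi *
          ∫ t in Set.Ioi a, Real.sqrt t * Real.exp (-(α ^ 2 * t) - r ^ 2 * (4 * t)⁻¹) : ℝ) : ℂ) := by
    have hstep : ∀ t ∈ Set.Ioi a, ((t * Real.exp (-(α ^ 2 * t)) : ℝ) : ℂ)
          * (∫ κ : ℝ, ((Real.exp (-(t * κ ^ 2)) : ℝ) : ℂ) * Complex.exp (Complex.I * κ * r))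
        = ((Real.sqrt Real.pi *
            (Real.sqrt t * Real.exp (-(α ^ 2 * t) - r ^ 2 * (4 * t)⁻¹)) : ℝ) : ℂ) := by
      intro t ht
      have ht0 : 0 < t := lt_trans ha ht
      have hst : (0:ℝ) < Real.sqrt t := Real.sqrt_pos.mpr ht0
      rw [gauss_ft t r ht0, ← Complex.ofReal_mul]
      congr 1
      rw [Real.sqrt_div hπ0.le t]
      calc t * Real.exp (-(α ^ 2 * t)) *
            (Real.sqrt Real.pi / Real.sqrt t * Real.exp (-(r ^ 2 / (4 * t))))
          = Real.sqrt Real.pi * (t / Real.sqrt t *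
              (Real.exp (-(α ^ 2 * t)) * Real.exp (-(r ^ 2 / (4 * t))))) := by ring
        _ = Real.sqrt Real.pi * (Real.sqrt t * Real.exp (-(α ^ 2 * t) - r ^ 2 * (4 * t)⁻¹)) := by
            rw [Real.div_sqrt, ← Real.exp_add,
              show -(α ^ 2 * t) + -(r ^ 2 / (4 * t)) = -(α ^ 2 * t) - r ^ 2 * (4 * t)⁻¹ by ring]
    have h1 : (∫ t in Set.Ioi a, ((Real.sqrt Real.pi *
          (Real.sqrt t * Real.exp (-(α ^ 2 * t) - r ^ 2 * (4 * t)⁻¹)) : ℝ) : ℂ))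
        = (((∫ t in Set.Ioi a, Real.sqrt Real.pi *
            (Real.sqrt t * Real.exp (-(α ^ 2 * t) - r ^ 2 * (4 * t)⁻¹))) : ℝ) : ℂ) :=
      integral_ofReal (𝕜 := ℂ)
    rw [setIntegral_congr_fun measurableSet_Ioi hstep, h1, integral_const_mul]
  rw [hInner]
  rw [(J_integral α r a hα ha).2]
  -- Step 3: clean up the boundary values
  have hsqa : Real.sqrt a = 1 / (2 * ξ) := by
    rw [ha_def, show (1:ℝ) / (4 * ξ ^ 2) = (1 / (2 * ξ)) ^ 2 by field_simp; ring]
    exact Real.sqrt_sq (by positivity)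
  rw [hsqa]
  rw [show α * (1 / (2 * ξ)) - r / 2 * (1 / (2 * ξ))⁻¹ = α / (2 * ξ) - ξ * r by
    field_simp]
  rw [show α * (1 / (2 * ξ)) + r / 2 * (1 / (2 * ξ))⁻¹ = α / (2 * ξ) + ξ * r by
    field_simp]
  rw [show Real.exp (-(α ^ 2 * a) - r ^ 2 * (4 * a)⁻¹)
      = Real.exp (-(α ^ 2 / (4 * ξ ^ 2))) * Real.exp (-(ξ ^ 2 * r ^ 2)) by
    rw [← Real.exp_add]; congr 1; rw [ha_def]; field_simp; ring]
  -- Step 4: final real arithmetic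
  norm_cast
  simp only [erfc]
  set em := erf (α / (2 * ξ) - ξ * r)
  set ep := erf (α / (2 * ξ) + ξ * r)
  set Eone := Real.exp (-(α ^ 2 / (4 * ξ ^ 2)))
  set Etwo := Real.exp (-(ξ ^ 2 * r ^ 2))
  set Xp := Real.exp (α * r)
  set Xm := Real.exp (-(α * r))
  set s := Real.sqrt Real.pi with hs_def
  have hππ : Real.pi = s ^ 2 := (Real.sq_sqrt hπ0.le).symm
  rw [hππ]
  have hs0 : s ≠ 0 := ne_of_gt hsqpi
  field_simp
  ring
end

section
/- Let ξ > 0 and r ∈ ℝ. Define, for α > 0, Λ(α) = λ(α) + (1/α) β⁺(α) − r β⁻(α), where λ(α) = (2/(√π ξ)) e^{-α²/(4ξ²)} e^{-ξ² r²}, β⁺(α) = e^{α r} erfc(α/(2ξ) + ξ r) + e^{-α r} erfc(α/(2ξ) − ξ r), and β⁻(α) = e^{α r} erfc(α/(2ξ) + ξ r) − e^{-α r} erfc(α/(2ξ) − ξ r). Then lim_{α → 0⁺} ( −( 2π e^{-α|r|} (1 + α|r|) − π α Λ(α) ) / α³ ) = −(2π/3) ( |r|³ − r³ erf(ξ r)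 + (e^{-ξ² r²}/(√π ξ)) ( 1/(2ξ²) − r² ) ). -/
open MeasureTheory

lemma hasDerivAt_erf (t : ℝ) :
    HasDerivAt erf (2 / Real.sqrt Real.pi * Real.exp (-(t ^ 2))) t := by
  have hc : Continuous fun s : ℝ => Real.exp (-(s ^ 2)) := by continuity
  have h := (hc.integral_hasStrictDerivAt 0 t).hasDerivAt
  exact h.const_mul (2 / Real.sqrt Real.pi)

lemma erf_neg (t : ℝ) : erf (-t) = - erf t := by
  unfold erf
  rw [← mul_neg]
  congr 1
  have h := intervalIntegral.integral_comp_neg (a := (0:ℝ)) (b := t)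
    (fun s => Real.exp (-(s ^ 2)))
  simp only [neg_sq, neg_zero] at h
  rw [h]
  exact intervalIntegral.integral_symm _ _

lemma hasDerivAt_erfc (t : ℝ) :
    HasDerivAt erfc (-(2 / Real.sqrt Real.pi * Real.exp (-(t ^ 2)))) t :=
  (hasDerivAt_erf t).const_sub 1

namespace BZM

noncomputable def ff (ξ r α : ℝ) : ℝ := Real.exp (α * r) * erfc (α / (2 * ξ) + ξ * r)
noncomputable def gg (ξ r α : ℝ) : ℝ := Real.exp (-(α * r)) * erfc (α / (2 * ξ) - ξ * r)
noncomputable def EE (ξ r α : ℝ) : ℝ :=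
  Real.exp (-(α ^ 2 / (4 * ξ ^ 2))) * Real.exp (-(ξ ^ 2 * r ^ 2))
noncomputable def lam (ξ r α : ℝ) : ℝ := 2 / (Real.sqrt Real.pi * ξ) * EE ξ r α
noncomputable def NN (ξ r α : ℝ) : ℝ :=
  -(2 * Real.pi * Real.exp (-(α * |r|)) * (1 + α * |r|))
  + (Real.pi * α * lam ξ r α + Real.pi * (ff ξ r α + gg ξ r α)
     - Real.pi * α * r * (ff ξ r α - gg ξ r α))
noncomputable def MM (ξ r α : ℝ) : ℝ :=
  2 * r ^ 2 * Real.exp (-(α * |r|)) - α / (2 * ξ ^ 2) * lam ξ r α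
  - r ^ 2 * (ff ξ r α + gg ξ r α)

variable {ξ r : ℝ}

lemma expf (hξ : ξ ≠ 0) (α : ℝ) :
    Real.exp (α * r) * Real.exp (-((α / (2 * ξ) + ξ * r) ^ 2)) = EE ξ r α := by
  unfold EE
  rw [← Real.exp_add, ← Real.exp_add]
  congr 1
  field_simp
  ring

lemma expg (hξ : ξ ≠ 0) (α : ℝ) :
    Real.exp (-(α * r)) * Real.exp (-((α / (2 * ξ) - ξ * r) ^ 2)) = EE ξ r α := by
  unfold EE
  rw [← Real.exp_add, ← Real.exp_add]
  congr 1
  field_simp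
  ring

lemma hasDerivAt_ff (hξ : ξ ≠ 0) (α : ℝ) :
    HasDerivAt (ff ξ r)
      (r * ff ξ r α - 1 / (Real.sqrt Real.pi * ξ) * EE ξ r α) α := by
  have hπ : Real.sqrt Real.pi ≠ 0 := ne_of_gt (Real.sqrt_pos.2 Real.pi_pos)
  have h1 : HasDerivAt (fun α : ℝ => α * r) r α := by
    simpa using (hasDerivAt_id α).mul_const r
  have h2 := h1.exp
  have h3 : HasDerivAt (fun α : ℝ => α / (2 * ξ) + ξ * r) (1 / (2 * ξ)) α := by
    simpa using ((hasDerivAt_id α).div_const (2 * ξ)).add_const (ξ * r)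
  have h4 := (hasDerivAt_erfc (α / (2 * ξ) + ξ * r)).comp α h3
  have h5 := h2.mul h4
  have key := expf (r := r) hξ α
  refine h5.congr_deriv ?_
  symm
  simp only [Function.comp]
  unfold ff
  linear_combination (1 / (Real.sqrt Real.pi * ξ)) * key

lemma hasDerivAt_gg (hξ : ξ ≠ 0) (α : ℝ) :
    HasDerivAt (gg ξ r)
      (-(r * gg ξ r α) - 1 / (Real.sqrt Real.pi * ξ) * EE ξ r α) α := by
  have h1 : HasDerivAt (fun α : ℝ => -(α * r)) (-r) α := by
    exact ((hasDerivAt_id α).mul_const r).neg.congr_deriv (by simp)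
  have h2 := h1.exp
  have h3 : HasDerivAt (fun α : ℝ => α / (2 * ξ) - ξ * r) (1 / (2 * ξ)) α := by
    simpa using ((hasDerivAt_id α).div_const (2 * ξ)).sub_const (ξ * r)
  have h4 := (hasDerivAt_erfc (α / (2 * ξ) - ξ * r)).comp α h3
  have h5 := h2.mul h4
  have key := expg (r := r) hξ α
  refine h5.congr_deriv ?_
  symm
  simp only [Function.comp]
  unfold gg
  linear_combination (1 / (Real.sqrt Real.pi * ξ)) * key

lemma hasDerivAt_EE (hξ : ξ ≠ 0) (α : ℝ) :
    HasDerivAt (EE ξ r) (-(α / (2 * ξ ^ 2)) * EE ξ r α) α := by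
  have h : HasDerivAt (fun α : ℝ => -(α ^ 2 / (4 * ξ ^ 2))) (-(α / (2 * ξ ^ 2))) α := by
    have h0 := ((hasDerivAt_pow 2 α).div_const (4 * ξ ^ 2)).neg
    refine h0.congr_deriv ?_
    symm
    field_simp
    ring
  have h2 := h.exp.mul_const (Real.exp (-(ξ ^ 2 * r ^ 2)))
  refine h2.congr_deriv ?_
  symm
  unfold EE
  ring

lemma hasDerivAt_lam (hξ : ξ ≠ 0) (α : ℝ) :
    HasDerivAt (lam ξ r) (-(α / (2 * ξ ^ 2)) * lam ξ r α) α := by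
  have h := (hasDerivAt_EE (r := r) hξ α).const_mul (2 / (Real.sqrt Real.pi * ξ))
  refine h.congr_deriv ?_
  symm
  unfold lam
  ring

lemma hasDerivAt_NN (hξ : ξ ≠ 0) (α : ℝ) :
    HasDerivAt (NN ξ r) (Real.pi * α * MM ξ r α) α := by
  have habs : |r| * |r| = r ^ 2 := by rw [abs_mul_abs_self]; ring
  have he : HasDerivAt (fun α : ℝ => Real.exp (-(α * |r|)))
      (Real.exp (-(α * |r|)) * (-|r|)) α := by
    have h1 : HasDerivAt (fun α : ℝ => -(α * |r|)) (-|r|) α := by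
      exact ((hasDerivAt_id α).mul_const |r|).neg.congr_deriv (by simp)
    exact h1.exp
  have hlin : HasDerivAt (fun α : ℝ => 1 + α * |r|) |r| α := by
    simpa using ((hasDerivAt_id α).mul_const |r|).const_add 1
  have hA := ((he.const_mul (2 * Real.pi)).mul hlin).neg
  have hlam := hasDerivAt_lam (r := r) hξ α
  have hf := hasDerivAt_ff (r := r) hξ α
  have hg := hasDerivAt_gg (r := r) hξ α
  have hid : HasDerivAt (fun α : ℝ => Real.pi * α) Real.pi α := by
    simpa using (hasDerivAt_id α).const_mul Real.pi
  have t2 := hid.mul hlam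
  have t3 := (hf.add hg).const_mul Real.pi
  have t4 := (hid.mul_const r).mul (hf.sub hg)
  have h := hA.add ((t2.add t3).sub t4)
  refine h.congr_deriv ?_
  symm
  unfold MM lam
  simp only [Pi.sub_apply]
  ring_nf
  rw [← habs]
  ring

lemma hasDerivAt_MM (hξ : ξ ≠ 0) (α : ℝ) :
    HasDerivAt (MM ξ r)
      (-(2 * r ^ 2 * |r|) * Real.exp (-(α * |r|)) - 1 / (2 * ξ ^ 2) * lam ξ r α
        + α ^ 2 / (4 * ξ ^ 4) * lam ξ r α
        - r ^ 2 * (r * (ff ξ r α - gg ξ r α) - lam ξ r α)) α := by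
  have he : HasDerivAt (fun α : ℝ => Real.exp (-(α * |r|)))
      (Real.exp (-(α * |r|)) * (-|r|)) α := by
    have h1 : HasDerivAt (fun α : ℝ => -(α * |r|)) (-|r|) α := by
      exact ((hasDerivAt_id α).mul_const |r|).neg.congr_deriv (by simp)
    exact h1.exp
  have hlam := hasDerivAt_lam (r := r) hξ α
  have hf := hasDerivAt_ff (r := r) hξ α
  have hg := hasDerivAt_gg (r := r) hξ α
  have hd : HasDerivAt (fun α : ℝ => α / (2 * ξ ^ 2)) (1 / (2 * ξ ^ 2)) α :=
    (hasDerivAt_id α).div_const (2 * ξ ^ 2)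
  have h := ((he.const_mul (2 * r ^ 2)).sub (hd.mul hlam)).sub
    ((hf.add hg).const_mul (r ^ 2))
  refine h.congr_deriv ?_
  symm
  unfold lam
  ring

lemma ff_zero : ff ξ r 0 = erfc (ξ * r) := by simp [ff]
lemma gg_zero : gg ξ r 0 = erfc (-(ξ * r)) := by simp [gg]
lemma EE_zero : EE ξ r 0 = Real.exp (-(ξ ^ 2 * r ^ 2)) := by
  simp [EE]
lemma NN_zero : NN ξ r 0 = 0 := by
  simp [NN, ff_zero, gg_zero, erfc, erf_neg]
  ring
lemma MM_zero : MM ξ r 0 = 0 := by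
  simp [MM, ff_zero, gg_zero, erfc, erf_neg]
  ring

end BZM

/-- The `α → 0⁺` limit giving the real-space part of the biharmonic kernel at the zero
mode of the doubly periodic Ewald decomposition:
`lim_{α→0⁺} −(2π e^{-α|r|}(1+α|r|) − παΛ(α))/α³
  = −(2π/3)(|r|³ − r³ erf(ξr) + (e^{-ξ²r²}/(√π ξ))(1/(2ξ²) − r²))`, where
`Λ(α) = λ(α) + (1/α)β⁺(α) − r β⁻(α)`,
`λ(α) = (2/(√π ξ)) e^{-α²/(4ξ²)} e^{-ξ²r²}`,
`β±(α) = e^{αr} erfc(α/(2ξ)+ξr) ± e^{-αr} erfc(α/(2ξ)−ξr)`. -/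
theorem biharmonic_zero_mode_limit (ξ r : ℝ) (hξ : 0 < ξ) :
    Filter.Tendsto
      (fun α : ℝ =>
        -((2 * Real.pi * Real.exp (-(α * |r|)) * (1 + α * |r|)
            - Real.pi * α *
              ((2 / (Real.sqrt Real.pi * ξ)) * Real.exp (-(α ^ 2 / (4 * ξ ^ 2))) *
                  Real.exp (-(ξ ^ 2 * r ^ 2))
                + (1 / α) *
                  (Real.exp (α * r) * erfc (α / (2 * ξ) + ξ * r)
                    + Real.exp (-(α * r)) * erfc (α / (2 * ξ) - ξ * r))
                - r *
                  (Real.exp (α * r) * erfc (α / (2 * ξ) + ξ * r)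
                    - Real.exp (-(α * r)) * erfc (α / (2 * ξ) - ξ * r)))) / α ^ 3))
      (nhdsWithin 0 (Set.Ioi (0 : ℝ)))
      (nhds (-(2 * Real.pi / 3) *
        (|r| ^ 3 - r ^ 3 * erf (ξ * r)
          + (Real.exp (-(ξ ^ 2 * r ^ 2)) / (Real.sqrt Real.pi * ξ)) *
              (1 / (2 * ξ ^ 2) - r ^ 2)))) := by
  have hξ0 : ξ ≠ 0 := ne_of_gt hξ
  have hπ : Real.sqrt Real.pi ≠ 0 := ne_of_gt (Real.sqrt_pos.2 Real.pi_pos)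
  set L : ℝ := -(2 * Real.pi / 3) * (|r| ^ 3 - r ^ 3 * erf (ξ * r)
      + (Real.exp (-(ξ ^ 2 * r ^ 2)) / (Real.sqrt Real.pi * ξ)) *
        (1 / (2 * ξ ^ 2) - r ^ 2)) with hL
  -- the limit of the slope of MM at 0
  have hval : Real.pi / 3 *
      (-(2 * r ^ 2 * |r|) * Real.exp (-(0 * |r|)) - 1 / (2 * ξ ^ 2) * BZM.lam ξ r 0
        + 0 ^ 2 / (4 * ξ ^ 4) * BZM.lam ξ r 0
        - r ^ 2 * (r * (BZM.ff ξ r 0 - BZM.gg ξ r 0) - BZM.lam ξ r 0)) = L := by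
    have habs : r ^ 2 * |r| = |r| ^ 3 := by rw [← sq_abs]; ring
    simp only [BZM.ff_zero, BZM.gg_zero, BZM.lam, BZM.EE, erfc, erf_neg, hL,
      zero_mul, neg_zero, Real.exp_zero, zero_pow two_ne_zero, zero_div, mul_one]
    field_simp
    rw [← habs]
    ring
  have hM2 : Filter.Tendsto (fun α => BZM.MM ξ r α / α) (nhdsWithin 0 (Set.Ioi (0:ℝ)))
      (nhds (-(2 * r ^ 2 * |r|) * Real.exp (-(0 * |r|)) - 1 / (2 * ξ ^ 2) * BZM.lam ξ r 0
        + 0 ^ 2 / (4 * ξ ^ 4) * BZM.lam ξ r 0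
        - r ^ 2 * (r * (BZM.ff ξ r 0 - BZM.gg ξ r 0) - BZM.lam ξ r 0))) := by
    have hM := hasDerivAt_iff_tendsto_slope.1 (BZM.hasDerivAt_MM (r := r) hξ0 0)
    have hsub : Set.Ioi (0:ℝ) ⊆ {(0:ℝ)}ᶜ := fun x hx => ne_of_gt hx
    have h1 := hM.mono_left (nhdsWithin_mono 0 hsub)
    refine Filter.Tendsto.congr' ?_ h1
    filter_upwards [self_mem_nhdsWithin] with x hx
    simp [slope_def_field, BZM.MM_zero]
  have key : Filter.Tendsto (fun α => BZM.NN ξ r α / α ^ 3)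
      (nhdsWithin 0 (Set.Ioi (0:ℝ))) (nhds L) := by
    apply HasDerivAt.lhopital_zero_nhdsGT
      (f' := fun α => Real.pi * α * BZM.MM ξ r α) (g' := fun α => 3 * α ^ 2)
    · exact Filter.Eventually.of_forall fun x => BZM.hasDerivAt_NN hξ0 x
    · exact Filter.Eventually.of_forall fun x => by simpa using hasDerivAt_pow 3 x
    · filter_upwards [self_mem_nhdsWithin] with x hx
      have hx' : (0:ℝ) < x := hx
      positivity
    · have h := (BZM.hasDerivAt_NN (r := r) hξ0 0).continuousAt
      have h2 := (h.continuousWithinAt (s := Set.Ioi (0:ℝ))).tendsto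
      simpa [BZM.NN_zero] using h2
    · have h : Filter.Tendsto (fun α : ℝ => α ^ 3) (nhds 0) (nhds 0) := by
        simpa using (continuous_pow 3).tendsto (0:ℝ)
      exact h.mono_left nhdsWithin_le_nhds
    · have hdiv0 := hM2.const_mul (Real.pi / 3)
      rw [hval] at hdiv0
      refine Filter.Tendsto.congr' ?_ hdiv0
      filter_upwards [self_mem_nhdsWithin] with x hx
      have hx0 : x ≠ 0 := ne_of_gt hx
      field_simp
  refine Filter.Tendsto.congr' ?_ key
  filter_upwards [self_mem_nhdsWithin] with x hx
  have hx0 : x ≠ 0 := ne_of_gt hx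
  unfold BZM.NN BZM.lam BZM.EE BZM.ff BZM.gg
  field_simp
  ring
end

section
/- Let k > 0, ξ > 0 and r ∈ ℝ². Then (1/(2π)²) ∫_{ℝ²} (4π/(k² + |κ|²)) e^{-(k² + |κ|²)/(4ξ²)} e^{i κ·r} dκ = K₀(k²/(4ξ²), ξ²|r|²), where for ν ∈ ℤ the incomplete modified Bessel function of the second kind is K_ν(a, b) = ∫₁^∞ t^{-ν-1} e^{-a t − b/t} dt. -/
open MeasureTheory

/-- The incomplete modified Bessel function of the second kind of order `ν`,
`K_ν(a, b) = ∫₁^∞ t^{-ν-1} e^{-at − b/t} dt`. -/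
noncomputable def besselKinc (ν : ℤ) (a b : ℝ) : ℝ :=
  ∫ t in Set.Ioi (1:ℝ), (t : ℝ) ^ (-ν - 1) * Real.exp (-(a * t) - b / t)

section aux

open Set Complex

lemma schwinger_aux (A c0 : ℝ) (hA : 0 < A) :
    ∫ s in Set.Ioi c0, Real.exp (-(A * s)) = A⁻¹ * Real.exp (-(A * c0)) := by
  rw [integral_comp_mul_left_Ioi (fun y => Real.exp (-y)) c0 hA, integral_exp_neg_Ioi,
    smul_eq_mul]

lemma gauss_aux (s : ℝ) (hs : 0 < s) (r : EuclideanSpace ℝ (Fin 2)) :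
    ∫ κ : EuclideanSpace ℝ (Fin 2),
        Complex.exp (-(s:ℂ) * (‖κ‖:ℂ)^2 + Complex.I * ((inner ℝ r κ : ℝ):ℂ))
      = ((Real.pi / s : ℝ) : ℂ) * Complex.exp (-((‖r‖^2 / (4*s) : ℝ) : ℂ)) := by
  have hb : 0 < ((s:ℂ)).re := by simpa using hs
  rw [GaussianFourier.integral_cexp_neg_mul_sq_norm_add hb Complex.I r]
  rw [finrank_euclideanSpace_fin]
  norm_num
  exact Or.inl (by rw [neg_div])

lemma fubini_aux (k ξ : ℝ) (hk : 0 < k) (hξ : 0 < ξ) (r : EuclideanSpace ℝ (Fin 2)) :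
    Integrable (Function.uncurry (fun (κ : EuclideanSpace ℝ (Fin 2)) (s : ℝ) =>
        Complex.exp (-(((k^2 + ‖κ‖^2) * s : ℝ) : ℂ)) *
          Complex.exp (Complex.I * ((inner ℝ κ r : ℝ) : ℂ))))
      ((volume : Measure (EuclideanSpace ℝ (Fin 2))).prod
        (volume.restrict (Set.Ioi (1/(4*ξ^2))))) := by
  set c0 : ℝ := 1/(4*ξ^2) with hc0
  have hc0p : 0 < c0 := by positivity
  have hg1 : Integrable (fun κ : EuclideanSpace ℝ (Fin 2) => Real.exp (-(c0 * ‖κ‖^2))) := by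
    have h := (GaussianFourier.integrable_cexp_neg_mul_sq_norm_add
      (V := EuclideanSpace ℝ (Fin 2)) (b := (c0:ℂ)) (by simpa using hc0p) 0 0).norm
    refine h.congr (Filter.Eventually.of_forall fun v => ?_)
    simp [Complex.norm_exp]
    norm_cast
    left; rfl
  have hg2 : IntegrableOn (fun s : ℝ => Real.exp (-(k^2) * s)) (Set.Ioi c0) :=
    exp_neg_integrableOn_Ioi c0 (by positivity)
  have hprod : Integrable (fun p : (EuclideanSpace ℝ (Fin 2)) × ℝ =>
      Real.exp (-(c0 * ‖p.1‖^2)) * Real.exp (-(k^2) * p.2))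
      (volume.prod (volume.restrict (Set.Ioi c0))) := hg1.mul_prod hg2
  have hcont : Continuous (Function.uncurry (fun (κ : EuclideanSpace ℝ (Fin 2)) (s : ℝ) =>
      Complex.exp (-(((k^2 + ‖κ‖^2) * s : ℝ) : ℂ)) *
        Complex.exp (Complex.I * ((inner ℝ κ r : ℝ) : ℂ)))) := by
    have c1 : Continuous fun p : (EuclideanSpace ℝ (Fin 2)) × ℝ =>
        (k^2 + ‖p.1‖^2) * p.2 := by fun_prop
    have c2 : Continuous fun p : (EuclideanSpace ℝ (Fin 2)) × ℝ => (inner ℝ p.1 r : ℝ) :=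
      (continuous_fst.inner continuous_const)
    exact (Complex.continuous_exp.comp ((Complex.continuous_ofReal.comp c1).neg)).mul
      (Complex.continuous_exp.comp (continuous_const.mul (Complex.continuous_ofReal.comp c2)))
  have hae : ∀ᵐ p : (EuclideanSpace ℝ (Fin 2)) × ℝ
      ∂(volume.prod (volume.restrict (Set.Ioi c0))), p.2 ∈ Set.Ioi c0 :=
    MeasureTheory.Measure.quasiMeasurePreserving_snd.tendsto_ae.eventually
      (ae_restrict_mem measurableSet_Ioi)
  refine hprod.mono' hcont.aestronglyMeasurable ?_
  filter_upwards [hae] with p hp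
  have hs : c0 < p.2 := hp
  simp only [Function.uncurry, norm_mul, Complex.norm_exp]
  have h1 : ((-(((k^2 + ‖p.1‖^2) * p.2 : ℝ) : ℂ))).re = -((k^2 + ‖p.1‖^2) * p.2) := by
    simp only [Complex.neg_re, Complex.ofReal_re]
  have h2 : ((Complex.I * ((inner ℝ p.1 r : ℝ) : ℂ))).re = 0 := by simp
  rw [h1, h2, Real.exp_zero, mul_one, ← Real.exp_add, Real.exp_le_exp]
  have hn : (0:ℝ) ≤ ‖p.1‖^2 := by positivity
  nlinarith

lemma integral_ofReal'' {X : Type*} [MeasurableSpace X] (μ : Measure X) (f : X → ℝ) :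
    ∫ x, ((f x : ℝ) : ℂ) ∂μ = ((∫ x, f x ∂μ : ℝ) : ℂ) :=
  integral_ofReal

end aux

/-- Two-dimensional inverse Fourier transform of the screened harmonic kernel at
periodic wavenumber `k`:
`(1/(2π)²) ∫_{ℝ²} (4π/(k²+|κ|²)) e^{-(k²+|κ|²)/(4ξ²)} e^{iκ·r} dκ
  = K₀(k²/(4ξ²), ξ²|r|²)`. -/
theorem screened_harmonic_2d_inverse_fourier (k ξ : ℝ) (hk : 0 < k) (hξ : 0 < ξ)
    (r : EuclideanSpace ℝ (Fin 2)) :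
    ((1 / (2 * Real.pi) ^ 2 : ℝ) : ℂ) *
      (∫ κ : EuclideanSpace ℝ (Fin 2),
        ((4 * Real.pi / (k ^ 2 + ‖κ‖ ^ 2) *
            Real.exp (-((k ^ 2 + ‖κ‖ ^ 2) / (4 * ξ ^ 2))) : ℝ) : ℂ) *
          Complex.exp (Complex.I * ((inner ℝ κ r : ℝ) : ℂ)))
    = ((besselKinc 0 (k ^ 2 / (4 * ξ ^ 2)) (ξ ^ 2 * ‖r‖ ^ 2) : ℝ) : ℂ) := by
  have hπ := Real.pi_pos
  set c0 : ℝ := 1/(4*ξ^2) with hc0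
  have hc0p : 0 < c0 := by positivity
  set f : EuclideanSpace ℝ (Fin 2) → ℝ → ℂ := fun κ s =>
    Complex.exp (-(((k^2 + ‖κ‖^2) * s : ℝ) : ℂ)) *
      Complex.exp (Complex.I * ((inner ℝ κ r : ℝ) : ℂ)) with hf
  -- Step 1: rewrite the kernel as an integral over s
  have step1 : ∀ κ : EuclideanSpace ℝ (Fin 2),
      ((4 * Real.pi / (k ^ 2 + ‖κ‖ ^ 2) *
          Real.exp (-((k ^ 2 + ‖κ‖ ^ 2) / (4 * ξ ^ 2))) : ℝ) : ℂ) *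
        Complex.exp (Complex.I * ((inner ℝ κ r : ℝ) : ℂ))
      = (4 * Real.pi : ℂ) * ∫ s in Set.Ioi c0, f κ s := by
    intro κ
    have hA : 0 < k ^ 2 + ‖κ‖ ^ 2 := by positivity
    have h1 : (4 * Real.pi / (k ^ 2 + ‖κ‖ ^ 2) *
        Real.exp (-((k ^ 2 + ‖κ‖ ^ 2) / (4 * ξ ^ 2))) : ℝ)
        = 4 * Real.pi * ∫ s in Set.Ioi c0, Real.exp (-((k ^ 2 + ‖κ‖ ^ 2) * s)) := by
      rw [schwinger_aux _ _ hA, hc0, mul_one_div]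
      ring
    have hpt : ∀ s : ℝ, ((Real.exp (-((k^2+‖κ‖^2)*s)) : ℝ) : ℂ) *
        Complex.exp (Complex.I * ((inner ℝ κ r : ℝ):ℂ)) = f κ s := by
      intro s
      simp only [hf, Complex.ofReal_exp, Complex.ofReal_neg]
    rw [h1, Complex.ofReal_mul, ← integral_ofReal'', mul_assoc,
      ← MeasureTheory.integral_mul_const]
    simp_rw [hpt]
    push_cast
    ring
  rw [MeasureTheory.integral_congr_ae (Filter.Eventually.of_forall step1),
    MeasureTheory.integral_const_mul,
    MeasureTheory.integral_integral_swap (fubini_aux k ξ hk hξ r)]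
  -- Step 2: evaluate the inner Gaussian integral
  have step2 : ∀ s ∈ Set.Ioi c0, (∫ κ : EuclideanSpace ℝ (Fin 2), f κ s)
      = ((Real.pi / s * Real.exp (-(k^2*s) - ‖r‖^2/(4*s)) : ℝ) : ℂ) := by
    intro s hs
    have hs0 : 0 < s := lt_trans hc0p hs
    have hfs : ∀ κ : EuclideanSpace ℝ (Fin 2), f κ s
        = Complex.exp (-(s:ℂ) * (‖κ‖:ℂ)^2 + Complex.I * ((inner ℝ r κ : ℝ):ℂ)) *
            Complex.exp (-((k^2*s : ℝ):ℂ)) := by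
      intro κ
      simp only [hf]
      rw [real_inner_comm r κ, ← Complex.exp_add, ← Complex.exp_add]
      congr 1
      push_cast
      ring
    simp_rw [hfs]
    rw [MeasureTheory.integral_mul_const, gauss_aux s hs0 r, mul_assoc, ← Complex.exp_add]
    push_cast
    rw [mul_eq_mul_left_iff]
    left
    congr 1
    ring
  rw [MeasureTheory.setIntegral_congr_fun measurableSet_Ioi step2, integral_ofReal'']
  rw [← Complex.ofReal_ofNat, ← Complex.ofReal_mul, ← Complex.ofReal_mul, ← Complex.ofReal_mul]
  congr 1
  -- Step 3: real computation and change of variables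
  have hJ : (∫ s in Set.Ioi c0, Real.pi / s * Real.exp (-(k^2*s) - ‖r‖^2/(4*s)))
      = Real.pi * ∫ s in Set.Ioi c0, s⁻¹ * Real.exp (-(k^2*s) - ‖r‖^2/(4*s)) := by
    rw [← MeasureTheory.integral_const_mul]
    congr 1 with s
    ring
  rw [hJ]
  have hbes : besselKinc 0 (k ^ 2 / (4 * ξ ^ 2)) (ξ ^ 2 * ‖r‖ ^ 2)
      = ∫ s in Set.Ioi c0, s⁻¹ * Real.exp (-(k^2*s) - ‖r‖^2/(4*s)) := by
    rw [besselKinc]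
    have hcv := integral_comp_mul_left_Ioi
      (fun s => s⁻¹ * Real.exp (-(k^2*s) - ‖r‖^2/(4*s))) 1 hc0p
    rw [mul_one] at hcv
    have hpt : Set.EqOn (fun t : ℝ => (t:ℝ) ^ (-(0:ℤ) - 1) *
        Real.exp (-(k ^ 2 / (4 * ξ ^ 2) * t) - ξ ^ 2 * ‖r‖ ^ 2 / t))
        (fun t : ℝ => c0 * ((c0*t)⁻¹ * Real.exp (-(k^2*(c0*t)) - ‖r‖^2/(4*(c0*t)))))
        (Set.Ioi 1) := by
      intro t ht
      have ht0 : (0:ℝ) < t := lt_trans one_pos ht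
      simp only [neg_zero, zpow_neg, zpow_one]
      rw [mul_inv]
      have harg : -(k ^ 2 / (4 * ξ ^ 2) * t) - ξ ^ 2 * ‖r‖ ^ 2 / t
          = -(k^2*(c0*t)) - ‖r‖^2/(4*(c0*t)) := by
        rw [hc0]; field_simp
      rw [harg]
      field_simp
      simp [zpow_neg_one, ht0.ne']
    rw [MeasureTheory.setIntegral_congr_fun measurableSet_Ioi hpt,
      MeasureTheory.integral_const_mul, hcv, smul_eq_mul]
    field_simp
    congr 1 with x
    ring_nf
  rw [hbes]
  have hπ2 : (2 * Real.pi) ^ 2 = 4 * (Real.pi * Real.pi) := by ring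
  field_simp [hπ2]
  rw [show (2:ℝ) ^ 2 = 4 by norm_num]
  congr 2 with s
  ring_nf
end

section
/- Let k > 0, ξ > 0 and r ∈ ℝ². Then −(1/(2π)²) ∫_{ℝ²} (8π/(k² + |κ|²)²) e^{-(k² + |κ|²)/(4ξ²)} (1 + (k² + |κ|²)/(4ξ²)) e^{i κ·r} dκ = −(1/(2ξ²)) K₋₁(k²/(4ξ²), ξ²|r|²), where for ν ∈ ℤ the incomplete modified Bessel function of the second kind is K_ν(a, b) = ∫₁^∞ t^{-ν-1} e^{-a t − b/t} dt. -/
open MeasureTheory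

open Set Filter Complex

section Aux

lemma lemA_deriv {s : ℝ} (hs : 0 < s) (x : ℝ) :
    HasDerivAt (fun β : ℝ => -(β / s + 1 / s ^ 2) * Real.exp (-(β * s)))
      (x * Real.exp (-(x * s))) x := by
  have h1 : HasDerivAt (fun β : ℝ => -(β / s + 1 / s ^ 2)) (-(1/s)) x := by
    have := (((hasDerivAt_id x).div_const s).add_const (1 / s ^ 2)).neg
    exact this
  have h2 : HasDerivAt (fun β : ℝ => Real.exp (-(β * s))) (-s * Real.exp (-(x * s))) x := by
    have : HasDerivAt (fun β : ℝ => -(β * s)) (-s) x := by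
      exact (((hasDerivAt_id' x).mul_const s).neg).congr_deriv (by simp)
    simpa [mul_comm] using this.exp
  have h3 := h1.mul h2
  refine h3.congr_deriv ?_
  have hs0 : s ≠ 0 := hs.ne'
  field_simp
  ring

lemma lemA_tendsto {s : ℝ} (hs : 0 < s) :
    Tendsto (fun β : ℝ => -(β / s + 1 / s ^ 2) * Real.exp (-(β * s))) atTop (nhds 0) := by
  have h1 : Tendsto (fun β : ℝ => β * s) atTop atTop :=
    Tendsto.atTop_mul_const hs tendsto_id
  have h2 : Tendsto (fun y : ℝ => y * Real.exp (-y)) atTop (nhds 0) := by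
    simpa using Real.tendsto_pow_mul_exp_neg_atTop_nhds_zero 1
  have h3 : Tendsto (fun β : ℝ => (β * s) * Real.exp (-(β * s))) atTop (nhds 0) := h2.comp h1
  have h4 : Tendsto (fun β : ℝ => Real.exp (-(β * s))) atTop (nhds 0) :=
    Real.tendsto_exp_atBot.comp (tendsto_neg_atBot_iff.mpr h1)
  have h5 := (h3.const_mul (-(1/s^2))).sub (h4.const_mul (1/s^2))
  rw [mul_zero, mul_zero, sub_zero] at h5
  refine h5.congr (fun β => ?_)
  field_simp
  ring

lemma lemA_pos {α : ℝ} (hα : 0 < α) {s : ℝ} (hs : 0 < s) :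
    ∀ x ∈ Ioi α, 0 ≤ x * Real.exp (-(x * s)) := fun x hx =>
  mul_nonneg (le_of_lt (lt_trans hα hx)) (Real.exp_pos _).le

lemma lemA_s18 {s : ℝ} (hs : 0 < s) {α : ℝ} (hα : 0 < α) :
    ∫ β in Ioi α, β * Real.exp (-(β * s)) = Real.exp (-(α * s)) * (α / s + 1 / s ^ 2) := by
  have := integral_Ioi_of_hasDerivAt_of_nonneg' (fun x _ => lemA_deriv hs x)
    (lemA_pos hα hs) (lemA_tendsto hs)
  rw [this]
  field_simp
  ring

lemma lemAint {s : ℝ} (hs : 0 < s) {α : ℝ} (hα : 0 < α) :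
    IntegrableOn (fun β : ℝ => β * Real.exp (-(β * s))) (Ioi α) :=
  integrableOn_Ioi_deriv_of_nonneg' (fun x _ => lemA_deriv hs x)
    (lemA_pos hα hs) (lemA_tendsto hs)

lemma lemB (k : ℝ) (hk : 0 < k) (r : EuclideanSpace ℝ (Fin 2)) {β : ℝ} (hβ : 0 < β) :
    ∫ κ : EuclideanSpace ℝ (Fin 2),
      ((8 * Real.pi * β : ℝ) : ℂ) * Complex.exp (-((β * (k ^ 2 + ‖κ‖ ^ 2) : ℝ) : ℂ)) *
        Complex.exp (Complex.I * ((inner ℝ κ r : ℝ) : ℂ))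
    = ((8 * Real.pi ^ 2 * Real.exp (-(β * k ^ 2) - ‖r‖ ^ 2 / (4 * β)) : ℝ) : ℂ) := by
  have hβ0 : (β : ℂ) ≠ 0 := by exact_mod_cast hβ.ne'
  have hβ' : 0 < ((β : ℂ)).re := by simpa using hβ
  have key := GaussianFourier.integral_cexp_neg_mul_sq_norm_add (V := EuclideanSpace ℝ (Fin 2))
    hβ' Complex.I r
  have hfin : (Module.finrank ℝ (EuclideanSpace ℝ (Fin 2)) : ℂ) = 2 := by
    simp [finrank_euclideanSpace_fin]
  rw [hfin] at key
  have h2 : ((2 : ℂ) / 2) = 1 := by norm_num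
  rw [h2, Complex.cpow_one] at key
  calc ∫ κ : EuclideanSpace ℝ (Fin 2),
      ((8 * Real.pi * β : ℝ) : ℂ) * Complex.exp (-((β * (k ^ 2 + ‖κ‖ ^ 2) : ℝ) : ℂ)) *
        Complex.exp (Complex.I * ((inner ℝ κ r : ℝ) : ℂ))
      = ∫ κ : EuclideanSpace ℝ (Fin 2),
        (((8 * Real.pi * β : ℝ) : ℂ) * Complex.exp (-((β * k ^ 2 : ℝ) : ℂ))) *
          Complex.exp (-(β : ℂ) * (‖κ‖ : ℂ) ^ 2 + Complex.I * ((inner ℝ r κ : ℝ) : ℂ)) := by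
        congr 1; ext κ
        rw [real_inner_comm r κ, mul_assoc, mul_assoc, ← Complex.exp_add]
        rw [mul_assoc, ← Complex.exp_add]
        congr 1
        push_cast
        ring
    _ = (((8 * Real.pi * β : ℝ) : ℂ) * Complex.exp (-((β * k ^ 2 : ℝ) : ℂ))) *
        ((↑Real.pi / ↑β) * Complex.exp (Complex.I ^ 2 * (‖r‖ : ℂ) ^ 2 / (4 * ↑β))) := by
        rw [integral_const_mul, key]
    _ = ((8 * Real.pi ^ 2 * Real.exp (-(β * k ^ 2) - ‖r‖ ^ 2 / (4 * β)) : ℝ) : ℂ) := by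
        rw [Complex.I_sq]
        push_cast
        rw [show (-(↑β * (k:ℂ) ^ 2) - (‖r‖:ℂ) ^ 2 / (4 * ↑β))
            = -(↑β * (k:ℂ) ^ 2) + (-1 * (‖r‖:ℂ) ^ 2 / (4 * ↑β)) by ring, Complex.exp_add]
        field_simp

lemma lemC (k ξ : ℝ) (hk : 0 < k) (hξ : 0 < ξ) (r : EuclideanSpace ℝ (Fin 2))
    {α : ℝ} (hα : 0 < α) :
    Integrable (Function.uncurry (fun (κ : EuclideanSpace ℝ (Fin 2)) (β : ℝ) =>
      ((8 * Real.pi * β : ℝ) : ℂ) * Complex.exp (-((β * (k ^ 2 + ‖κ‖ ^ 2) : ℝ) : ℂ)) *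
        Complex.exp (Complex.I * ((inner ℝ κ r : ℝ) : ℂ))))
      ((volume : Measure (EuclideanSpace ℝ (Fin 2))).prod (volume.restrict (Ioi α))) := by
  have hα' : 0 < ((α : ℂ)).re := by simpa using hα
  have hcont : Continuous (Function.uncurry (fun (κ : EuclideanSpace ℝ (Fin 2)) (β : ℝ) =>
      ((8 * Real.pi * β : ℝ) : ℂ) * Complex.exp (-((β * (k ^ 2 + ‖κ‖ ^ 2) : ℝ) : ℂ)) *
        Complex.exp (Complex.I * ((inner ℝ κ r : ℝ) : ℂ)))) := by
    have c1 : Continuous fun p : EuclideanSpace ℝ (Fin 2) × ℝ => (8 * Real.pi * p.2 : ℝ) := by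
      fun_prop
    have c2 : Continuous fun p : EuclideanSpace ℝ (Fin 2) × ℝ => (p.2 * (k ^ 2 + ‖p.1‖ ^ 2) : ℝ) := by
      fun_prop
    have c3 : Continuous fun p : EuclideanSpace ℝ (Fin 2) × ℝ => (inner ℝ p.1 r : ℝ) :=
      Continuous.inner continuous_fst continuous_const
    exact ((Complex.continuous_ofReal.comp c1).mul
      (Complex.continuous_exp.comp ((Complex.continuous_ofReal.comp c2).neg))).mul
      (Complex.continuous_exp.comp (continuous_const.mul (Complex.continuous_ofReal.comp c3)))
  have hg1 : Integrable (fun v : EuclideanSpace ℝ (Fin 2) =>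
      Real.exp (-(α * ‖v‖ ^ 2))) volume := by
    have h := (GaussianFourier.integrable_cexp_neg_mul_sq_norm_add
      (V := EuclideanSpace ℝ (Fin 2)) hα' 0 (0 : EuclideanSpace ℝ (Fin 2))).norm
    refine h.congr (ae_of_all _ fun v => ?_)
    simp [Complex.norm_exp, ← Complex.ofReal_pow]
  have hg2 : Integrable (fun β : ℝ => 8 * Real.pi * (β * Real.exp (-(β * k ^ 2))))
      (volume.restrict (Ioi α)) := by
    have : (0:ℝ) < k ^ 2 := by positivity
    exact (integrableOn_Ioi_deriv_of_nonneg' (fun x _ => lemA_deriv this x)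
      (lemA_pos hα this) (lemA_tendsto this)).const_mul (8 * Real.pi)
  have hprod := hg1.mul_prod hg2
  refine hprod.mono' hcont.aestronglyMeasurable ?_
  have hmeq : (volume : Measure (EuclideanSpace ℝ (Fin 2))).prod (volume.restrict (Ioi α))
      = ((volume : Measure (EuclideanSpace ℝ (Fin 2))).prod volume).restrict
        (univ ×ˢ Ioi α) := by
    rw [← Measure.prod_restrict, Measure.restrict_univ]
  rw [hmeq]
  filter_upwards [ae_restrict_mem ((MeasurableSet.univ).prod measurableSet_Ioi)] with p hp
  have hβ : α < p.2 := hp.2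
  have hβ0 : (0:ℝ) < p.2 := lt_trans hα hβ
  have e1 : ‖Function.uncurry (fun (κ : EuclideanSpace ℝ (Fin 2)) (β : ℝ) =>
      ((8 * Real.pi * β : ℝ) : ℂ) * Complex.exp (-((β * (k ^ 2 + ‖κ‖ ^ 2) : ℝ) : ℂ)) *
        Complex.exp (Complex.I * ((inner ℝ κ r : ℝ) : ℂ))) p‖
      = 8 * Real.pi * p.2 * Real.exp (-(p.2 * (k ^ 2 + ‖p.1‖ ^ 2))) := by
    simp only [Function.uncurry, norm_mul, Complex.norm_exp,
      Complex.norm_real, Real.norm_eq_abs]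
    rw [abs_of_pos (by norm_num : (0:ℝ) < 8), abs_of_pos Real.pi_pos, abs_of_pos hβ0]
    simp only [Complex.mul_re, Complex.I_re, Complex.I_im, Complex.neg_re, Complex.ofReal_re,
      Complex.ofReal_im, Complex.mul_im, Complex.add_re]
    norm_num [← Complex.ofReal_pow]
  rw [e1]
  have e2 : Real.exp (-(p.2 * (k ^ 2 + ‖p.1‖ ^ 2)))
      = Real.exp (-(p.2 * k ^ 2)) * Real.exp (-(p.2 * ‖p.1‖ ^ 2)) := by
    rw [← Real.exp_add]; ring_nf
  have e3 : Real.exp (-(p.2 * ‖p.1‖ ^ 2)) ≤ Real.exp (-(α * ‖p.1‖ ^ 2)) :=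
    Real.exp_le_exp.mpr (by nlinarith [sq_nonneg ‖p.1‖])
  calc 8 * Real.pi * p.2 * Real.exp (-(p.2 * (k ^ 2 + ‖p.1‖ ^ 2)))
      = (8 * Real.pi * p.2 * Real.exp (-(p.2 * k ^ 2))) * Real.exp (-(p.2 * ‖p.1‖ ^ 2)) := by
        rw [e2]; ring
    _ ≤ (8 * Real.pi * p.2 * Real.exp (-(p.2 * k ^ 2))) * Real.exp (-(α * ‖p.1‖ ^ 2)) := by
        have h0 : 0 ≤ 8 * Real.pi * p.2 * Real.exp (-(p.2 * k ^ 2)) := by positivity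
        exact mul_le_mul_of_nonneg_left e3 h0
    _ = Real.exp (-(α * ‖p.1‖ ^ 2)) * (8 * Real.pi * (p.2 * Real.exp (-(p.2 * k ^ 2)))) := by
        ring

end Aux

/-- Two-dimensional inverse Fourier transform of the screened biharmonic kernel at
periodic wavenumber `k`:
`−(1/(2π)²) ∫_{ℝ²} (8π/(k²+|κ|²)²) e^{-(k²+|κ|²)/(4ξ²)} (1+(k²+|κ|²)/(4ξ²)) e^{iκ·r} dκ
  = −(1/(2ξ²)) K₋₁(k²/(4ξ²), ξ²|r|²)`. -/
theorem screened_biharmonic_2d_inverse_fourier (k ξ : ℝ) (hk : 0 < k) (hξ : 0 < ξ)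
    (r : EuclideanSpace ℝ (Fin 2)) :
    -(((1 / (2 * Real.pi) ^ 2 : ℝ) : ℂ) *
      (∫ κ : EuclideanSpace ℝ (Fin 2),
        ((8 * Real.pi / (k ^ 2 + ‖κ‖ ^ 2) ^ 2 *
            Real.exp (-((k ^ 2 + ‖κ‖ ^ 2) / (4 * ξ ^ 2))) *
            (1 + (k ^ 2 + ‖κ‖ ^ 2) / (4 * ξ ^ 2)) : ℝ) : ℂ) *
          Complex.exp (Complex.I * ((inner ℝ κ r : ℝ) : ℂ))))
    = ((-(1 / (2 * ξ ^ 2)) *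
        besselKinc (-1) (k ^ 2 / (4 * ξ ^ 2)) (ξ ^ 2 * ‖r‖ ^ 2) : ℝ) : ℂ) := by
  have hπ : (0:ℝ) < Real.pi := Real.pi_pos
  set α : ℝ := 1 / (4 * ξ ^ 2) with hαdef
  have hα : 0 < α := by positivity
  set G : EuclideanSpace ℝ (Fin 2) → ℝ → ℂ := fun κ β =>
    ((8 * Real.pi * β : ℝ) : ℂ) * Complex.exp (-((β * (k ^ 2 + ‖κ‖ ^ 2) : ℝ) : ℂ)) *
      Complex.exp (Complex.I * ((inner ℝ κ r : ℝ) : ℂ)) with hGdef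
  -- Step 1 : pointwise identity
  have step1 : ∀ κ : EuclideanSpace ℝ (Fin 2),
      ((8 * Real.pi / (k ^ 2 + ‖κ‖ ^ 2) ^ 2 *
          Real.exp (-((k ^ 2 + ‖κ‖ ^ 2) / (4 * ξ ^ 2))) *
          (1 + (k ^ 2 + ‖κ‖ ^ 2) / (4 * ξ ^ 2)) : ℝ) : ℂ) *
        Complex.exp (Complex.I * ((inner ℝ κ r : ℝ) : ℂ))
      = ∫ β in Ioi α, G κ β := by
    intro κ
    have hs : (0:ℝ) < k ^ 2 + ‖κ‖ ^ 2 := by positivity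
    have hs0 : (k ^ 2 + ‖κ‖ ^ 2 : ℝ) ≠ 0 := hs.ne'
    have hξ0 : ξ ≠ 0 := hξ.ne'
    have hA := lemA_s18 hs hα
    have hreal : (8 * Real.pi / (k ^ 2 + ‖κ‖ ^ 2) ^ 2 *
        Real.exp (-((k ^ 2 + ‖κ‖ ^ 2) / (4 * ξ ^ 2))) *
        (1 + (k ^ 2 + ‖κ‖ ^ 2) / (4 * ξ ^ 2)) : ℝ)
        = ∫ β in Ioi α, 8 * Real.pi * (β * Real.exp (-(β * (k ^ 2 + ‖κ‖ ^ 2)))) := by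
      rw [integral_const_mul, hA,
        show ((k ^ 2 + ‖κ‖ ^ 2) / (4 * ξ ^ 2)) = α * (k ^ 2 + ‖κ‖ ^ 2) by
          rw [hαdef]; ring]
      rw [hαdef]
      field_simp
      ring
    rw [hreal]
    rw [show ((∫ β in Ioi α, 8 * Real.pi * (β * Real.exp (-(β * (k ^ 2 + ‖κ‖ ^ 2)))) : ℝ) : ℂ)
        = ∫ β in Ioi α, ((8 * Real.pi * (β * Real.exp (-(β * (k ^ 2 + ‖κ‖ ^ 2)))) : ℝ) : ℂ)
        from (integral_ofReal).symm]
    rw [← integral_mul_const]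
    congr 1; ext β
    simp only [hGdef]
    push_cast
    ring
  rw [integral_congr_ae (ae_of_all _ step1)]
  -- Step 2 : Fubini
  have hint : Integrable (Function.uncurry G)
      ((volume : Measure (EuclideanSpace ℝ (Fin 2))).prod (volume.restrict (Ioi α))) := by
    rw [hGdef]
    exact lemC k ξ hk hξ r hα
  rw [integral_integral_swap hint]
  -- Step 3 : Gaussian integral for each β
  have step3 : ∀ β ∈ Ioi α, (∫ κ : EuclideanSpace ℝ (Fin 2), G κ β)
      = ((8 * Real.pi ^ 2 * Real.exp (-(β * k ^ 2) - ‖r‖ ^ 2 / (4 * β)) : ℝ) : ℂ) := by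
    intro β hβ
    exact lemB k hk r (lt_trans hα hβ)
  rw [setIntegral_congr_fun measurableSet_Ioi step3]
  rw [show (∫ β in Ioi α, ((8 * Real.pi ^ 2 * Real.exp (-(β * k ^ 2) - ‖r‖ ^ 2 / (4 * β)) : ℝ) : ℂ))
      = ((∫ β in Ioi α, (8 * Real.pi ^ 2 * Real.exp (-(β * k ^ 2) - ‖r‖ ^ 2 / (4 * β)) : ℝ) : ℝ) : ℂ)
      from integral_ofReal]
  -- Step 5 : substitution
  have step5 : (∫ β in Ioi α, (8 * Real.pi ^ 2 * Real.exp (-(β * k ^ 2) - ‖r‖ ^ 2 / (4 * β)) : ℝ))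
      = 8 * Real.pi ^ 2 * (α * besselKinc (-1) (k ^ 2 / (4 * ξ ^ 2)) (ξ ^ 2 * ‖r‖ ^ 2)) := by
    rw [integral_const_mul]
    have hsub := MeasureTheory.integral_comp_mul_left_Ioi
      (fun x => Real.exp (-(x * k ^ 2) - ‖r‖ ^ 2 / (4 * x))) 1 hα
    rw [mul_one] at hsub
    have : (∫ β in Ioi α, Real.exp (-(β * k ^ 2) - ‖r‖ ^ 2 / (4 * β)))
        = α * ∫ x in Ioi (1:ℝ), Real.exp (-(α * x * k ^ 2) - ‖r‖ ^ 2 / (4 * (α * x))) := by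
      rw [hsub, smul_eq_mul, ← mul_assoc, mul_inv_cancel₀ hα.ne', one_mul]
    rw [this]
    congr 1
    congr 1
    rw [besselKinc]
    refine setIntegral_congr_fun measurableSet_Ioi (fun t ht => ?_)
    have ht0 : (0:ℝ) < t := lt_trans one_pos ht
    have : (-(-1:ℤ) - 1) = 0 := by norm_num
    rw [this, zpow_zero, one_mul]
    congr 1
    rw [hαdef]
    have hξ0 : ξ ≠ 0 := hξ.ne'
    field_simp
  rw [step5]
  -- final arithmetic
  rw [show ((8 * Real.pi ^ 2 * (α * besselKinc (-1) (k ^ 2 / (4 * ξ ^ 2)) (ξ ^ 2 * ‖r‖ ^ 2)) : ℝ) : ℂ)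
      = (((8 * Real.pi ^ 2 * α : ℝ) : ℂ) * ((besselKinc (-1) (k ^ 2 / (4 * ξ ^ 2)) (ξ ^ 2 * ‖r‖ ^ 2) : ℝ) : ℂ)) by push_cast; ring]
  rw [show ((-(1 / (2 * ξ ^ 2)) * besselKinc (-1) (k ^ 2 / (4 * ξ ^ 2)) (ξ ^ 2 * ‖r‖ ^ 2) : ℝ) : ℂ)
      = ((-(1 / (2 * ξ ^ 2)) : ℝ) : ℂ) * ((besselKinc (-1) (k ^ 2 / (4 * ξ ^ 2)) (ξ ^ 2 * ‖r‖ ^ 2) : ℝ) : ℂ) by push_cast; ring]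
  rw [← neg_mul, ← mul_assoc]
  congr 1
  rw [hαdef]
  have hπ0 : (Real.pi : ℂ) ≠ 0 := by exact_mod_cast hπ.ne'
  have hξ0 : (ξ : ℂ) ≠ 0 := by exact_mod_cast hξ.ne'
  push_cast
  field_simp
  ring
end
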